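/- arXiv:2603.26627 — 10 statements merged into one kernel-verified Lean document; each statement's English description precedes it below -/
import Mathlib

section
/- Let μ > 0, β ∈ ℝ and f_max ≥ 0 be real numbers with discriminant D = β² − 4·μ·f_max > 0, and let y_e⁻ = (β − √D)/(2μ) and y_e⁺ = (β + √D)/(2μ). Suppose y : ℝ → ℝ satisfies y'(t) = μ·y(t)² − β·y(t) + f_max for all t ≥ 0 and y_e⁻ < y(0) < y_e⁺. Then y is strictly decreasing on [0, ∞), satisfies y_e⁻ < y(t) < y(0) for all t > 0, and y(t) converges to y_e⁻ as t → ∞. -/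
open Filter Real Set

/-- Riccati ODE, case D > 0 with initial value strictly between the two equilibria:
the solution is strictly decreasing on [0,∞), stays strictly between y_e⁻ and y 0,
and converges to y_e⁻ as t → ∞. -/
theorem riccati_between_equilibria_decreasing
    (μ β fmax : ℝ) (hμ : 0 < μ) (hf : 0 ≤ fmax)
    (hD : 0 < β ^ 2 - 4 * μ * fmax)
    (y : ℝ → ℝ)
    (hy : ∀ t ≥ (0 : ℝ), HasDerivAt y (μ * y t ^ 2 - β * y t + fmax) t)
    (h0lo : (β - Real.sqrt (β ^ 2 - 4 * μ * fmax)) / (2 * μ) < y 0)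
    (h0hi : y 0 < (β + Real.sqrt (β ^ 2 - 4 * μ * fmax)) / (2 * μ)) :
    StrictAntiOn y (Set.Ici (0 : ℝ)) ∧
      (∀ t > (0 : ℝ),
        (β - Real.sqrt (β ^ 2 - 4 * μ * fmax)) / (2 * μ) < y t ∧ y t < y 0) ∧
      Tendsto y atTop (nhds ((β - Real.sqrt (β ^ 2 - 4 * μ * fmax)) / (2 * μ))) := by
  have hs : 0 < Real.sqrt (β ^ 2 - 4 * μ * fmax) := Real.sqrt_pos.mpr hD
  set s := Real.sqrt (β ^ 2 - 4 * μ * fmax) with hsdef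
  have hsq : s ^ 2 = β ^ 2 - 4 * μ * fmax := Real.sq_sqrt hD.le
  set a := (β - s) / (2 * μ) with hadef
  set b := (β + s) / (2 * μ) with hbdef
  have h2ne : (2 * μ) ≠ 0 := by positivity
  have hba : μ * (b - a) = s := by rw [hadef, hbdef]; field_simp; ring
  have key : ∀ x : ℝ, μ * x ^ 2 - β * x + fmax = μ * (x - a) * (x - b) := by
    intro x
    rw [hadef, hbdef]
    field_simp
    ring_nf
    linear_combination hsq
  clear_value s a b
  -- continuity
  have hyc : ContinuousOn y (Ici 0) := fun t ht => ((hy t ht).continuousAt).continuousWithinAt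
  set Y : ℝ → ℝ := fun t => y (max t 0) with hYdef
  have hYc : Continuous Y :=
    hyc.comp_continuous (continuous_id.max continuous_const) (fun x => le_max_right x 0)
  have hYeq : ∀ t ≥ (0 : ℝ), Y t = y t := by
    intro t ht
    simp only [hYdef, max_eq_left ht]
  -- integrating factors
  set p : ℝ → ℝ := fun u => ∫ τ in (0:ℝ)..u, μ * (Y τ - b) with hpdef
  set q : ℝ → ℝ := fun u => ∫ τ in (0:ℝ)..u, μ * (Y τ - a) with hqdef
  have hpc : Continuous fun τ => μ * (Y τ - b) := by fun_prop
  have hqc : Continuous fun τ => μ * (Y τ - a) := by fun_prop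
  have hp : ∀ t, HasDerivAt p (μ * (Y t - b)) t := fun t =>
    (hpc.integral_hasStrictDerivAt 0 t).hasDerivAt
  have hq : ∀ t, HasDerivAt q (μ * (Y t - a)) t := fun t =>
    (hqc.integral_hasStrictDerivAt 0 t).hasDerivAt
  have hp0 : p 0 = 0 := intervalIntegral.integral_same
  have hq0 : q 0 = 0 := intervalIntegral.integral_same
  -- constancy helper
  have const_of : ∀ f : ℝ → ℝ, (∀ t ∈ Ici (0:ℝ), HasDerivAt f 0 t) → ∀ t ≥ (0:ℝ), f t = f 0 := by
    intro f hf' t ht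
    have hcont : ContinuousOn f (Icc 0 t) := fun x hx =>
      (hf' x hx.1).continuousAt.continuousWithinAt
    exact constant_of_has_deriv_right_zero hcont
      (fun x hx => (hf' x hx.1).hasDerivWithinAt) t (right_mem_Icc.mpr ht)
  -- (y - a) * exp (-p) is constant
  have hUconst : ∀ t ≥ (0:ℝ), (y t - a) * Real.exp (-p t) = (y 0 - a) * Real.exp (-p 0) := by
    apply const_of
    intro t ht
    have h1 := (hy t ht).sub_const a
    have h2 := ((hp t).neg).exp
    have h3 := h1.mul h2
    refine h3.congr_deriv ?_
    rw [key (y t), hYeq t ht]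
    ring
  have hVconst : ∀ t ≥ (0:ℝ), (b - y t) * Real.exp (-q t) = (b - y 0) * Real.exp (-q 0) := by
    apply const_of
    intro t ht
    have h1 := (hy t ht).const_sub b
    have h2 := ((hq t).neg).exp
    have h3 := h1.mul h2
    refine h3.congr_deriv ?_
    rw [key (y t), hYeq t ht]
    ring
  have hya : ∀ t ≥ (0:ℝ), y t - a = (y 0 - a) * Real.exp (p t) := by
    intro t ht
    have h := hUconst t ht
    rw [Real.exp_neg, ← div_eq_mul_inv, hp0, neg_zero, Real.exp_zero, mul_one,
      div_eq_iff (Real.exp_ne_zero _)] at h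
    exact h
  have hyb : ∀ t ≥ (0:ℝ), b - y t = (b - y 0) * Real.exp (q t) := by
    intro t ht
    have h := hVconst t ht
    rw [Real.exp_neg, ← div_eq_mul_inv, hq0, neg_zero, Real.exp_zero, mul_one,
      div_eq_iff (Real.exp_ne_zero _)] at h
    exact h
  have h0a : 0 < y 0 - a := sub_pos.mpr h0lo
  have h0b : 0 < b - y 0 := sub_pos.mpr h0hi
  have ha_lt : ∀ t ≥ (0:ℝ), a < y t := by
    intro t ht
    have := hya t ht
    nlinarith [Real.exp_pos (p t)]
  have hb_gt : ∀ t ≥ (0:ℝ), y t < b := by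
    intro t ht
    have := hyb t ht
    nlinarith [Real.exp_pos (q t)]
  -- p - q + s t is constant (zero)
  have hW : ∀ t ≥ (0:ℝ), p t - q t + s * t = 0 := by
    have h := const_of (fun t => p t - q t + s * t) ?_
    · intro t ht
      have := h t ht
      simpa [hp0, hq0] using this
    · intro t _
      have h1 := ((hp t).sub (hq t)).add ((hasDerivAt_id t).const_mul s)
      refine h1.congr_deriv ?_
      linear_combination -hba
  set r : ℝ := (y 0 - a) / (b - y 0) with hrdef
  have hr : 0 < r := div_pos h0a h0b
  -- explicit formula
  have hform : ∀ t ≥ (0:ℝ), y t =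
      (a + b * r * Real.exp (-(s * t))) / (1 + r * Real.exp (-(s * t))) := by
    intro t ht
    have hpt : p t = q t - s * t := by linarith [hW t ht]
    have hrel : y t - a = r * Real.exp (-(s * t)) * (b - y t) := by
      rw [hya t ht, hyb t ht, hpt, show q t - s * t = -(s * t) + q t by ring,
        Real.exp_add, hrdef]
      field_simp
    have hden : 0 < 1 + r * Real.exp (-(s * t)) := by positivity
    rw [eq_div_iff hden.ne']
    linear_combination hrel
  -- strict antitonicity
  have hanti : StrictAntiOn y (Ici 0) := by
    apply strictAntiOn_of_deriv_neg (convex_Ici 0) hyc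
    intro x hx
    rw [interior_Ici] at hx
    have hx0 : (0:ℝ) ≤ x := hx.le
    rw [(hy x hx0).deriv, key (y x)]
    exact mul_neg_of_pos_of_neg (mul_pos hμ (sub_pos.mpr (ha_lt x hx0)))
      (sub_neg.mpr (hb_gt x hx0))
  -- convergence
  have hE : Tendsto (fun t : ℝ => Real.exp (-(s * t))) atTop (nhds 0) := by
    apply Real.tendsto_exp_atBot.comp
    exact tendsto_neg_atTop_atBot.comp (Tendsto.const_mul_atTop hs tendsto_id)
  have hlim : Tendsto (fun t : ℝ =>
      (a + b * r * Real.exp (-(s * t))) / (1 + r * Real.exp (-(s * t)))) atTop (nhds a) := by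
    have hnum : Tendsto (fun t : ℝ => a + b * r * Real.exp (-(s * t))) atTop (nhds (a + b * r * 0)) :=
      tendsto_const_nhds.add (tendsto_const_nhds.mul hE)
    have hden : Tendsto (fun t : ℝ => 1 + r * Real.exp (-(s * t))) atTop (nhds (1 + r * 0)) :=
      tendsto_const_nhds.add (tendsto_const_nhds.mul hE)
    have := hnum.div hden (by norm_num)
    simpa [Pi.div_def] using this
  have htend : Tendsto y atTop (nhds a) := by
    apply hlim.congr'
    filter_upwards [eventually_ge_atTop (0:ℝ)] with t ht
    exact (hform t ht).symm
  exact ⟨hanti, fun t ht => ⟨ha_lt t ht.le, hanti (self_mem_Ici) (mem_Ici.mpr ht.le) ht⟩, htend⟩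
end

section
/- Let μ > 0, β ∈ ℝ and f_max ≥ 0 be real numbers with discriminant D = β² − 4·μ·f_max > 0, and let y_e⁻ = (β − √D)/(2μ). Suppose y : ℝ → ℝ satisfies y'(t) = μ·y(t)² − β·y(t) + f_max for all t ≥ 0 and y(0) < y_e⁻. Then y is strictly increasing on [0, ∞), satisfies y(0) < y(t) < y_e⁻ for all t > 0, and y(t) converges to y_e⁻ as t → ∞. -/
open Filter Real Set

/-- Riccati ODE, case D > 0 with initial value below the lower equilibrium:
the solution is strictly increasing on [0,∞), stays strictly between y 0 and y_e⁻,
and converges to y_e⁻ as t → ∞. -/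
theorem riccati_below_lower_equilibrium_increasing
    (μ β fmax : ℝ) (hμ : 0 < μ) (hf : 0 ≤ fmax)
    (hD : 0 < β ^ 2 - 4 * μ * fmax)
    (y : ℝ → ℝ)
    (hy : ∀ t ≥ (0 : ℝ), HasDerivAt y (μ * y t ^ 2 - β * y t + fmax) t)
    (h0 : y 0 < (β - Real.sqrt (β ^ 2 - 4 * μ * fmax)) / (2 * μ)) :
    StrictMonoOn y (Set.Ici (0 : ℝ)) ∧
      (∀ t > (0 : ℝ),
        y 0 < y t ∧ y t < (β - Real.sqrt (β ^ 2 - 4 * μ * fmax)) / (2 * μ)) ∧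
      Tendsto y atTop (nhds ((β - Real.sqrt (β ^ 2 - 4 * μ * fmax)) / (2 * μ))) := by
  set s := Real.sqrt (β ^ 2 - 4 * μ * fmax) with hs_def
  set ym := (β - s) / (2 * μ) with hym_def
  set yp := (β + s) / (2 * μ) with hyp_def
  have hs : 0 < s := Real.sqrt_pos.2 hD
  have hs2 : s ^ 2 = β ^ 2 - 4 * μ * fmax := Real.sq_sqrt hD.le
  have hlt : ym < yp := by
    rw [hym_def, hyp_def, div_lt_div_iff_of_pos_right (by positivity)]; linarith
  have factor : ∀ x : ℝ, μ * x ^ 2 - β * x + fmax = μ * ((x - ym) * (x - yp)) := by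
    intro x
    rw [hym_def, hyp_def]
    field_simp
    nlinarith [hs2]
  -- continuity of y on [0,∞)
  have hcy : ∀ t : ℝ, 0 ≤ t → ContinuousAt y t := fun t ht => (hy t ht).continuousAt
  have hcontOn : ContinuousOn y (Set.Ici 0) := fun x hx => (hcy x hx).continuousWithinAt
  -- the auxiliary continuous coefficient
  set cfun : ℝ → ℝ := fun t => μ * (y (max t 0) - yp) with hcfun_def
  have hmax : Continuous fun t : ℝ => max t 0 := continuous_id.max continuous_const
  have hccont : Continuous cfun := by
    rw [continuous_iff_continuousAt]
    intro t
    have h1 : ContinuousAt (fun u : ℝ => y (max u 0)) t :=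
      ContinuousAt.comp (hcy _ (le_max_right t 0)) hmax.continuousAt
    exact continuousAt_const.mul (h1.sub continuousAt_const)
  set C : ℝ → ℝ := fun u => ∫ x in (0:ℝ)..u, cfun x with hC_def
  have hC : ∀ t : ℝ, HasDerivAt C (cfun t) t := fun t =>
    intervalIntegral.integral_hasDerivAt_right (hccont.intervalIntegrable 0 t)
      (hccont.stronglyMeasurableAtFilter _ _) hccont.continuousAt
  have hCcont : Continuous C := continuous_iff_continuousAt.2 fun t => (hC t).continuousAt

  -- barrier: y stays below ym
  have hbar : ∀ t : ℝ, 0 ≤ t → y t < ym := by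
    intro T hT
    set h : ℝ → ℝ := fun t => (y t - ym) * Real.exp (-(C t)) with hh_def
    have hhd : ∀ x ∈ Set.Ico (0:ℝ) T, HasDerivWithinAt h 0 (Set.Ici x) x := by
      intro x hx
      have hdy := hy x hx.1
      have hd : HasDerivAt h
          ((μ * y x ^ 2 - β * y x + fmax) * Real.exp (-(C x)) +
            (y x - ym) * (Real.exp (-(C x)) * -(cfun x))) x :=
        (hdy.sub_const ym).mul ((hC x).neg.exp)
      have hval : (μ * y x ^ 2 - β * y x + fmax) * Real.exp (-(C x)) +
          (y x - ym) * (Real.exp (-(C x)) * -(cfun x)) = 0 := by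
        have hmx : max x 0 = x := max_eq_left hx.1
        rw [factor, hcfun_def]
        simp only [hmx]
        ring
      rw [hval] at hd
      exact hd.hasDerivWithinAt
    have hhc : ContinuousOn h (Set.Icc 0 T) := by
      intro x hx
      exact (((hcy x hx.1).sub continuousAt_const).mul
        ((Real.continuous_exp.comp hCcont.neg).continuousAt)).continuousWithinAt
    have hconst := constant_of_has_deriv_right_zero hhc hhd T ⟨hT, le_rfl⟩
    have e1 := Real.exp_pos (-(C T))
    have e2 := Real.exp_pos (-(C 0))
    rw [hh_def] at hconst
    simp only at hconst
    nlinarith [mul_pos e2 (sub_pos.2 h0)]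
  -- strict monotonicity
  have hsm : StrictMonoOn y (Set.Ici (0:ℝ)) := by
    apply strictMonoOn_of_hasDerivWithinAt_pos (convex_Ici 0) hcontOn
      (f' := fun x => μ * y x ^ 2 - β * y x + fmax)
    · intro x hx
      rw [interior_Ici] at hx
      exact (hy x hx.le).hasDerivWithinAt
    · intro x hx
      rw [interior_Ici] at hx
      have hb := hbar x hx.le
      rw [factor]
      have h1 : 0 < (ym - y x) * (yp - y x) :=
        mul_pos (by linarith) (by linarith [hb.trans hlt])
      nlinarith
  refine ⟨hsm, fun t ht => ⟨hsm (Set.self_mem_Ici) (Set.mem_Ici.2 ht.le) ht, hbar t ht.le⟩, ?_⟩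
  -- convergence
  set Y : ℝ → ℝ := fun t => y (max t 0) with hY_def
  have hYmono : Monotone Y := by
    intro a b hab
    exact hsm.monotoneOn (le_max_right a 0) (le_max_right b 0) (max_le_max hab le_rfl)
  have hYbdd : BddAbove (Set.range Y) := by
    refine ⟨ym, ?_⟩
    rintro _ ⟨t, rfl⟩
    exact (hbar _ (le_max_right t 0)).le
  set L := ⨆ t, Y t with hL_def
  have hYL : Tendsto Y atTop (nhds L) := tendsto_atTop_ciSup hYmono hYbdd
  have hEq : y =ᶠ[atTop] Y := by
    filter_upwards [eventually_ge_atTop (0:ℝ)] with t ht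
    rw [hY_def]; simp [max_eq_left ht]
  have hyL : Tendsto y atTop (nhds L) := hYL.congr' hEq.symm
  have hle : ∀ t : ℝ, 0 ≤ t → y t ≤ L := by
    intro t ht
    have : Y t ≤ L := le_ciSup hYbdd t
    simpa [hY_def, max_eq_left ht] using this
  have hLle : L ≤ ym := ciSup_le fun t => (hbar _ (le_max_right t 0)).le
  have hL0 : y 0 ≤ L := hle 0 le_rfl
  have hLeq : L = ym := by
    by_contra hne
    have hLlt : L < ym := lt_of_le_of_ne hLle hne
    set ε := μ * ((ym - L) * (yp - L)) with hε_def
    have hεpos : 0 < ε := by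
      have h2 : L < yp := hLlt.trans hlt
      exact mul_pos hμ (mul_pos (by linarith) (by linarith))
    -- z = y - ε t is monotone on [0,∞)
    have hz : MonotoneOn (fun t => y t - ε * t) (Set.Ici (0:ℝ)) := by
      apply monotoneOn_of_hasDerivWithinAt_nonneg (convex_Ici 0)
        (f' := fun x => (μ * y x ^ 2 - β * y x + fmax) - ε)
      · exact hcontOn.sub (continuous_const.mul continuous_id).continuousOn
      · intro x hx
        rw [interior_Ici] at hx
        have := ((hy x hx.le).sub ((hasDerivAt_id x).const_mul ε)).hasDerivWithinAt
          (s := interior (Set.Ici (0:ℝ)))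
        simp only [mul_one] at this; exact this
      · intro x hx
        rw [interior_Ici] at hx
        have h1 := hle x hx.le
        have h2 : L < yp := hLlt.trans hlt
        rw [factor, hε_def]
        have : (ym - L) * (yp - L) ≤ (y x - ym) * (y x - yp) := by nlinarith
        nlinarith
    have hbig : ∀ t : ℝ, 0 ≤ t → y 0 + ε * t ≤ y t := by
      intro t ht
      have := hz (Set.self_mem_Ici) (Set.mem_Ici.2 ht) ht
      simp only [mul_zero, sub_zero] at this
      linarith
    set T := (L - y 0) / ε + 1 with hT_def
    have hTpos : 0 ≤ T := by
      have : 0 ≤ (L - y 0) / ε := div_nonneg (by linarith) hεpos.le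
      rw [hT_def]; linarith
    have h1 := hbig T hTpos
    have h2 := hle T hTpos
    have h3 : ε * T = (L - y 0) + ε := by
      rw [hT_def]; field_simp
    nlinarith
  rw [← hLeq]
  exact hyL
end

section
/- Let μ > 0, β ∈ ℝ and f_max ≥ 0 be real numbers with discriminant D = β² − 4·μ·f_max > 0, let y_e⁺ = (β + √D)/(2μ), and let y₀ > y_e⁺. Then the Riccati initial value problem blows up in finite time: there is no function y : ℝ → ℝ such that y(0) = y₀ and y has derivative μ·y(t)² − β·y(t) + f_max at every t ≥ 0. -/
open Filter Real Set Topology Metric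

/-- Key comparison: if `y` solves the factored Riccati ODE and stays above `c`
on `[0, b]`, then `1/(y t - c) + μ t` is antitone, giving the blowup bound. -/
lemma riccati_key (μ m c : ℝ) (hμ : 0 < μ) (hmc : m ≤ c) (y : ℝ → ℝ) (b : ℝ) (hb : 0 ≤ b)
    (hderiv : ∀ t ∈ Icc (0:ℝ) b, HasDerivAt y (μ * (y t - m) * (y t - c)) t)
    (hpos : ∀ t ∈ Icc (0:ℝ) b, c < y t) :
    (y b - c)⁻¹ + μ * b ≤ (y 0 - c)⁻¹ := by
  set w : ℝ → ℝ := fun t => (y t - c)⁻¹ + μ * t with hw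
  have hwderiv : ∀ t ∈ Icc (0:ℝ) b,
      HasDerivAt w (-(μ * (y t - m) * (y t - c)) / (y t - c) ^ 2 + μ) t := by
    intro t ht
    have h1 : (0:ℝ) < y t - c := sub_pos.mpr (hpos t ht)
    have h2 : HasDerivAt (fun s => y s - c) (μ * (y t - m) * (y t - c)) t :=
      (hderiv t ht).sub_const c
    have h3 := h2.inv (ne_of_gt h1)
    have h4 : HasDerivAt (fun s : ℝ => μ * s) μ t := by
      simpa using (hasDerivAt_id t).const_mul μ
    exact h3.add h4
  have hcont : ContinuousOn w (Icc 0 b) := fun t ht =>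
    ((hwderiv t ht).continuousAt).continuousWithinAt
  have hdiff : DifferentiableOn ℝ w (interior (Icc (0:ℝ) b)) := by
    rw [interior_Icc]
    intro t ht
    exact ((hwderiv t ⟨le_of_lt ht.1, le_of_lt ht.2⟩).differentiableAt).differentiableWithinAt
  have hnonpos : ∀ t ∈ interior (Icc (0:ℝ) b), deriv w t ≤ 0 := by
    rw [interior_Icc]
    intro t ht
    have ht' : t ∈ Icc (0:ℝ) b := ⟨le_of_lt ht.1, le_of_lt ht.2⟩
    rw [(hwderiv t ht').deriv]
    have h1 : (0:ℝ) < y t - c := sub_pos.mpr (hpos t ht')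
    have hq : (μ * (y t - m) * (y t - c)) / (y t - c) ^ 2 = μ * (y t - m) / (y t - c) := by
      field_simp
    have hge : μ ≤ μ * (y t - m) / (y t - c) := by
      rw [le_div_iff₀ h1]
      nlinarith
    rw [neg_div, hq]
    linarith
  have hanti := antitoneOn_of_deriv_nonpos (convex_Icc 0 b) hcont hdiff hnonpos
  have := hanti (left_mem_Icc.mpr hb) (right_mem_Icc.mpr hb) hb
  simpa [hw] using this

/-- Riccati ODE, case D > 0 with initial value above the upper equilibrium:
finite-time blowup, i.e. no globally defined solution on [0,∞) exists. -/
theorem riccati_above_upper_equilibrium_blowup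
    (μ β fmax y₀ : ℝ) (hμ : 0 < μ) (hf : 0 ≤ fmax)
    (hD : 0 < β ^ 2 - 4 * μ * fmax)
    (hy₀ : (β + Real.sqrt (β ^ 2 - 4 * μ * fmax)) / (2 * μ) < y₀) :
    ¬ ∃ y : ℝ → ℝ, y 0 = y₀ ∧
        ∀ t ≥ (0 : ℝ), HasDerivAt y (μ * y t ^ 2 - β * y t + fmax) t := by
  rintro ⟨y, hy0, hderiv'⟩
  have h2μ : (0:ℝ) < 2 * μ := by linarith
  set r := Real.sqrt (β ^ 2 - 4 * μ * fmax) with hrdef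
  have hr2 : r ^ 2 = β ^ 2 - 4 * μ * fmax := Real.sq_sqrt hD.le
  have hrpos : 0 < r := Real.sqrt_pos.mpr hD
  set c := (β + r) / (2 * μ) with hcdef
  set m := (β - r) / (2 * μ) with hmdef
  have hmc : m ≤ c := by
    rw [hcdef, hmdef, div_le_div_iff₀ h2μ h2μ]
    nlinarith
  have hcy₀ : c < y₀ := hy₀
  -- rewrite the ODE in factored form
  have hfact : ∀ x : ℝ, μ * (x - m) * (x - c) = μ * x ^ 2 - β * x + fmax := by
    intro x
    rw [hmdef, hcdef]
    field_simp
    ring_nf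
    nlinarith [hr2]
  have hderiv : ∀ t ≥ (0:ℝ), HasDerivAt y (μ * (y t - m) * (y t - c)) t := by
    intro t ht
    rw [hfact (y t)]
    exact hderiv' t ht
  -- continuity on [0, ∞)
  have hcont : ∀ t ≥ (0:ℝ), ContinuousWithinAt y (Ici 0) t := fun t ht =>
    ((hderiv t ht).continuousAt).continuousWithinAt
  -- Step 1: y stays above c on [0, ∞)
  have hpos : ∀ t ≥ (0:ℝ), c < y t := by
    by_contra hS
    push_neg at hS
    obtain ⟨t₀, ht₀0, ht₀⟩ := hS
    set S : Set ℝ := {t | 0 ≤ t ∧ y t ≤ c} with hSdef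
    have hSne : S.Nonempty := ⟨t₀, ht₀0, ht₀⟩
    have hSbdd : BddBelow S := ⟨0, fun s hs => hs.1⟩
    set t₁ := sInf S with ht₁def
    have ht₁0 : 0 ≤ t₁ := le_csInf hSne fun s hs => hs.1
    have hlt : ∀ s, 0 ≤ s → s < t₁ → c < y s := by
      intro s hs0 hst
      by_contra h
      push_neg at h
      exact absurd (csInf_le hSbdd ⟨hs0, h⟩) (not_le.mpr hst)
    -- y t₁ ≤ c
    have hyt₁ : y t₁ ≤ c := by
      by_contra h
      push_neg at h
      have hc : ContinuousWithinAt y (Ici 0) t₁ := hcont t₁ ht₁0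
      have hev : {x | c < y x} ∈ 𝓝[Ici 0] t₁ := hc.tendsto (eventually_gt_nhds h)
      rw [Metric.mem_nhdsWithin_iff] at hev
      obtain ⟨ε, hε, hball⟩ := hev
      obtain ⟨s, hsS, hslt⟩ := exists_lt_of_csInf_lt hSne (show sInf S < t₁ + ε by
        rw [← ht₁def]; linarith)
      have hst : t₁ ≤ s := csInf_le hSbdd hsS
      have hsball : s ∈ Metric.ball t₁ ε ∩ Ici 0 := by
        constructor
        · rw [Metric.mem_ball, Real.dist_eq, abs_lt]
          constructor <;> linarith
        · exact hsS.1
      exact absurd (hball hsball) (not_lt.mpr hsS.2)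
    -- t₁ > 0
    have ht₁pos : 0 < t₁ := by
      rcases eq_or_lt_of_le ht₁0 with h | h
      · exfalso; rw [← h] at hyt₁; rw [hy0] at hyt₁; linarith
      · exact h
    -- on [0, t₁), y ≥ y₀ by the key lemma
    have hge : ∀ s ∈ Ioo (0:ℝ) t₁, y₀ ≤ y s := by
      intro s hs
      have hkey := riccati_key μ m c hμ hmc y s hs.1.le
        (fun t ht => hderiv t ht.1) (fun t ht => hlt t ht.1 (lt_of_le_of_lt ht.2 hs.2))
      have h1 : (0:ℝ) < y s - c := sub_pos.mpr (hlt s hs.1.le hs.2)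
      have h2 : (0:ℝ) < y 0 - c := by rw [hy0]; linarith
      have h3 : (y s - c)⁻¹ ≤ (y 0 - c)⁻¹ := by
        have := mul_pos hμ hs.1
        linarith [hkey]
      have h4 : y 0 - c ≤ y s - c := by
        have e1 : (y s - c) * (y s - c)⁻¹ = 1 := mul_inv_cancel₀ h1.ne'
        have e2 : (y 0 - c) * (y 0 - c)⁻¹ = 1 := mul_inv_cancel₀ h2.ne'
        nlinarith [inv_pos.mpr h1, inv_pos.mpr h2]
      rw [hy0] at h4
      linarith
    -- take limit s → t₁⁻
    have hne : (𝓝[Ioo (0:ℝ) t₁] t₁).NeBot := right_nhdsWithin_Ioo_neBot ht₁pos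
    have htend : Tendsto y (𝓝[Ioo (0:ℝ) t₁] t₁) (𝓝 (y t₁)) := by
      have hc : ContinuousWithinAt y (Ici 0) t₁ := hcont t₁ ht₁0
      exact hc.tendsto.mono_left (nhdsWithin_mono t₁ (fun x hx => hx.1.le))
    have : y₀ ≤ y t₁ :=
      ge_of_tendsto htend (eventually_nhdsWithin_of_forall hge)
    linarith
  -- Step 2: blowup bound contradiction
  have h2 : (0:ℝ) < y 0 - c := by rw [hy0]; linarith
  set T := (y₀ - c)⁻¹ / μ with hTdef
  have hT0 : 0 ≤ T := by
    apply div_nonneg _ hμ.le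
    rw [← hy0] at *
    positivity
  have hkey := riccati_key μ m c hμ hmc y T hT0
    (fun t ht => hderiv t ht.1) (fun t ht => hpos t ht.1)
  have h1 : (0:ℝ) < y T - c := sub_pos.mpr (hpos T hT0)
  have h2' : (0:ℝ) < y₀ - c := by rw [hy0] at h2; exact h2
  have hμT : μ * T = (y₀ - c)⁻¹ := by
    rw [hTdef]; field_simp [hμ.ne', h2'.ne']
  rw [hy0, hμT] at hkey
  have : (0:ℝ) < (y T - c)⁻¹ := inv_pos.mpr h1
  linarith
end

section
/- Let μ > 0, β ∈ ℝ and f_max ≥ 0 be real numbers with discriminant D = β² − 4·μ·f_max = 0, and let y* = β/(2μ). Suppose y : ℝ → ℝ satisfies y'(t) = μ·y(t)² − β·y(t) + f_max for all t ≥ 0 and y(0) < y*. Then y is strictly increasing on [0, ∞), satisfies y(t) < y* for all t ≥ 0, and y(t) converges to y* as t → ∞. -/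
open Filter Real Set

/-!
Since `D = 0`, the right-hand side is `μ (y - y*)²`, so `v = y - y*` solves `v' = μ v²`.
The quantity `v t * (1 - μ v(0) t) - v(0)` vanishes at `0` and satisfies a linear ODE, hence
vanishes identically by Grönwall; so `v t = v(0) / (1 - μ v(0) t)`, which for `v(0) < 0` is
negative, increasing and tends to `0`.
-/

theorem eq_zero_of_hasDerivWithinAt_eq_smul {E : Type*} [NormedAddCommGroup E] [NormedSpace ℝ E]
    {a : ℝ → ℝ} {h : ℝ → E} {s t : ℝ} (ha : ContinuousOn a (Icc s t))
    (hh : ContinuousOn h (Icc s t))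
    (hh' : ∀ x ∈ Ico s t, HasDerivWithinAt h (a x • h x) (Ici x) x) (hs : h s = 0) :
    ∀ x ∈ Icc s t, h x = 0 := by
  obtain ⟨K, hK⟩ := isCompact_Icc.exists_bound_of_continuousOn ha
  refine eq_zero_of_abs_deriv_le_mul_abs_self_of_eq_zero_right (K := K) hh hh' hs fun x hx => ?_
  rw [norm_smul]
  exact mul_le_mul_of_nonneg_right (hK x (Ico_subset_Icc_self hx)) (norm_nonneg _)

section PureRiccati

variable {μ : ℝ} {v : ℝ → ℝ}

theorem one_sub_mul_mul_pos (hμ : 0 ≤ μ) {c t : ℝ} (hc : c ≤ 0) (ht : 0 ≤ t) :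
    0 < 1 - μ * c * t := by
  nlinarith [mul_nonpos_of_nonpos_of_nonneg (mul_nonpos_of_nonneg_of_nonpos hμ hc) ht]

theorem mul_one_sub_eq_of_hasDerivAt_mul_sq (hv : ∀ t ≥ (0 : ℝ), HasDerivAt v (μ * v t ^ 2) t)
    {t : ℝ} (ht : 0 ≤ t) : v t * (1 - μ * v 0 * t) = v 0 := by
  set h : ℝ → ℝ := fun s => v s * (1 - μ * v 0 * s) - v 0
  have hcont : ContinuousOn v (Icc 0 t) := fun s hs => (hv s hs.1).continuousAt.continuousWithinAt
  have hh' : ∀ s ≥ (0 : ℝ), HasDerivAt h (μ * v s * h s) s := by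
    intro s hs
    have := ((hv s hs).mul (((hasDerivAt_id' s).const_mul (μ * v 0)).const_sub 1)).sub_const (v 0)
    exact this.congr_deriv (by simp only [h]; ring)
  have hzero := eq_zero_of_hasDerivWithinAt_eq_smul (s := 0) (t := t) (h := h)
    (continuousOn_const.mul hcont)
    (fun s hs => (hh' s hs.1).continuousAt.continuousWithinAt)
    (fun s hs => (hh' s hs.1).hasDerivWithinAt) (by simp [h]) t ⟨ht, le_rfl⟩
  simpa [h, sub_eq_zero] using hzero

theorem eq_div_of_hasDerivAt_mul_sq (hμ : 0 ≤ μ) (h0 : v 0 ≤ 0)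
    (hv : ∀ t ≥ (0 : ℝ), HasDerivAt v (μ * v t ^ 2) t) {t : ℝ} (ht : 0 ≤ t) :
    v t = v 0 / (1 - μ * v 0 * t) :=
  eq_div_of_mul_eq (one_sub_mul_mul_pos hμ h0 ht).ne'
    (mul_one_sub_eq_of_hasDerivAt_mul_sq hv ht)

theorem neg_of_hasDerivAt_mul_sq (hμ : 0 ≤ μ) (h0 : v 0 < 0)
    (hv : ∀ t ≥ (0 : ℝ), HasDerivAt v (μ * v t ^ 2) t) {t : ℝ} (ht : 0 ≤ t) : v t < 0 := by
  rw [eq_div_of_hasDerivAt_mul_sq hμ h0.le hv ht]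
  exact div_neg_of_neg_of_pos h0 (one_sub_mul_mul_pos hμ h0.le ht)

theorem tendsto_zero_of_hasDerivAt_mul_sq (hμ : 0 < μ) (h0 : v 0 < 0)
    (hv : ∀ t ≥ (0 : ℝ), HasDerivAt v (μ * v t ^ 2) t) : Tendsto v atTop (nhds 0) := by
  have hden : Tendsto (fun t => 1 - μ * v 0 * t) atTop atTop := by
    refine (tendsto_atTop_add_const_left _ 1
      (tendsto_id.const_mul_atTop (neg_pos.2 (mul_neg_of_pos_of_neg hμ h0)))).congr fun t => ?_
    simp only [id]
    ring
  refine ((tendsto_const_nhds (x := v 0)).div_atTop hden).congr' ?_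
  filter_upwards [eventually_ge_atTop 0] with t ht
  exact (eq_div_of_hasDerivAt_mul_sq hμ.le h0.le hv ht).symm

end PureRiccati

theorem riccati_rhs_eq_mul_sq_of_discriminant_eq_zero {μ β fmax : ℝ} (hμ : μ ≠ 0)
    (hD : β ^ 2 - 4 * μ * fmax = 0) (x : ℝ) :
    μ * x ^ 2 - β * x + fmax = μ * (x - β / (2 * μ)) ^ 2 := by
  have hfmax : fmax = β ^ 2 / (4 * μ) := by
    field_simp
    linarith
  rw [hfmax]
  field_simp
  ring

theorem riccati_critical_below_equilibrium_increasing_general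
    (μ β fmax : ℝ) (hμ : 0 < μ)
    (hD : β ^ 2 - 4 * μ * fmax = 0)
    (y : ℝ → ℝ)
    (hy : ∀ t ≥ (0 : ℝ), HasDerivAt y (μ * y t ^ 2 - β * y t + fmax) t)
    (h0 : y 0 < β / (2 * μ)) :
    StrictMonoOn y (Set.Ici (0 : ℝ)) ∧
      (∀ t ≥ (0 : ℝ), y t < β / (2 * μ)) ∧
      Tendsto y atTop (nhds (β / (2 * μ))) := by
  set ystar := β / (2 * μ)
  have hrhs := riccati_rhs_eq_mul_sq_of_discriminant_eq_zero hμ.ne' hD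
  set v : ℝ → ℝ := fun t => y t - ystar
  have hv : ∀ t ≥ (0 : ℝ), HasDerivAt v (μ * v t ^ 2) t := fun t ht => by
    simpa only [hrhs] using (hy t ht).sub_const ystar
  have hneg : ∀ t ≥ (0 : ℝ), v t < 0 := fun t ht =>
    neg_of_hasDerivAt_mul_sq (v := v) hμ.le (sub_neg.2 h0) hv ht
  refine ⟨?_, fun t ht => sub_neg.1 (hneg t ht), ?_⟩
  · refine strictMonoOn_of_hasDerivWithinAt_pos (convex_Ici 0)
      (fun t ht => (hy t ht).continuousAt.continuousWithinAt)
      (fun t ht => (hy t (interior_subset ht)).hasDerivWithinAt) fun t ht => ?_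
    rw [hrhs]
    exact mul_pos hμ (sq_pos_of_neg (hneg t (interior_subset ht)))
  · simpa [v] using
      (tendsto_zero_of_hasDerivAt_mul_sq (v := v) hμ (sub_neg.2 h0) hv).add_const ystar

/-- Riccati ODE, case D = 0 with initial value below the unique equilibrium y* = β/(2μ):
the solution is strictly increasing on [0,∞), stays below y*, and converges to y*. -/
theorem riccati_critical_below_equilibrium_increasing
    (μ β fmax : ℝ) (hμ : 0 < μ) (hf : 0 ≤ fmax)
    (hD : β ^ 2 - 4 * μ * fmax = 0)
    (y : ℝ → ℝ)
    (hy : ∀ t ≥ (0 : ℝ), HasDerivAt y (μ * y t ^ 2 - β * y t + fmax) t)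
    (h0 : y 0 < β / (2 * μ)) :
    StrictMonoOn y (Set.Ici (0 : ℝ)) ∧
      (∀ t ≥ (0 : ℝ), y t < β / (2 * μ)) ∧
      Tendsto y atTop (nhds (β / (2 * μ))) :=
  riccati_critical_below_equilibrium_increasing_general μ β fmax hμ hD y hy h0
end

section
/- Let μ > 0, β ∈ ℝ and f_max ≥ 0 be real numbers with discriminant D = β² − 4·μ·f_max = 0, let y* = β/(2μ), and let y₀ > y*. Then the Riccati initial value problem blows up in finite time: there is no function y : ℝ → ℝ such that y(0) = y₀ and y has derivative μ·y(t)² − β·y(t) + f_max at every t ≥ 0. -/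
open Filter Real Set

/-- Riccati ODE, case D = 0 with initial value above the unique equilibrium y* = β/(2μ):
finite-time blowup, i.e. no globally defined solution on [0,∞) exists. -/
theorem riccati_critical_above_equilibrium_blowup
    (μ β fmax y₀ : ℝ) (hμ : 0 < μ) (hf : 0 ≤ fmax)
    (hD : β ^ 2 - 4 * μ * fmax = 0)
    (hy₀ : β / (2 * μ) < y₀) :
    ¬ ∃ y : ℝ → ℝ, y 0 = y₀ ∧
        ∀ t ≥ (0 : ℝ), HasDerivAt y (μ * y t ^ 2 - β * y t + fmax) t := by
  rintro ⟨y, hy0, hy⟩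
  set c : ℝ := β / (2 * μ) with hc
  set z : ℝ → ℝ := fun t => y t - c with hzdef
  have hμ0 : (μ : ℝ) ≠ 0 := ne_of_gt hμ
  -- derivative of z
  have hz : ∀ t ≥ (0:ℝ), HasDerivAt z (μ * z t ^ 2) t := by
    intro t ht
    have h := (hy t ht).sub_const c
    have heq : μ * y t ^ 2 - β * y t + fmax = μ * z t ^ 2 := by
      simp only [hzdef, hc]
      field_simp
      nlinarith [hD]
    rwa [heq] at h
  -- z is monotone on [0,∞)
  have hmono : MonotoneOn z (Ici (0:ℝ)) := by
    apply monotoneOn_of_deriv_nonneg (convex_Ici 0)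
    · exact fun t ht => ((hz t ht).continuousAt).continuousWithinAt
    · intro t ht
      rw [interior_Ici] at ht
      exact ((hz t (le_of_lt ht)).differentiableAt).differentiableWithinAt
    · intro t ht
      rw [interior_Ici] at ht
      rw [(hz t (le_of_lt ht)).deriv]
      positivity
  have hz0 : 0 < z 0 := by
    simp only [hzdef, hy0]
    linarith
  have hpos : ∀ t ≥ (0:ℝ), 0 < z t := by
    intro t ht
    exact lt_of_lt_of_le hz0 (hmono self_mem_Ici ht ht)
  -- w = 1/z has derivative -μ
  set w : ℝ → ℝ := fun t => (z t)⁻¹ with hwdef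
  have hw : ∀ t ≥ (0:ℝ), HasDerivAt w (-μ) t := by
    intro t ht
    have h := (hz t ht).inv (ne_of_gt (hpos t ht))
    have : -(μ * z t ^ 2) / z t ^ 2 = -μ := by
      rw [neg_div, mul_div_assoc, div_self (pow_ne_zero 2 (ne_of_gt (hpos t ht))), mul_one]
    rwa [this] at h
  -- g = w + μ t has derivative 0 on [0,∞)
  set g : ℝ → ℝ := fun t => w t + μ * t with hgdef
  have hg : ∀ t ≥ (0:ℝ), HasDerivAt g 0 t := by
    intro t ht
    have h := (hw t ht).add ((hasDerivAt_id t).const_mul μ)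
    have e : (w + fun y => μ * id y) = g := rfl
    rw [e, show -μ + μ * 1 = 0 by ring] at h
    exact h
  set T : ℝ := w 0 / μ + 1 with hT
  have hw0 : 0 < w 0 := inv_pos.mpr hz0
  have hT0 : (0:ℝ) ≤ T := by
    have h1 : 0 < w 0 / μ := div_pos hw0 hμ
    rw [hT]
    linarith
  have hconst : g T = g 0 := by
    have := constant_of_has_deriv_right_zero
      (f := g) (a := 0) (b := T)
      (fun t ht => ((hg t ht.1).continuousAt).continuousWithinAt)
      (fun t ht => ((hg t ht.1).hasDerivWithinAt))
      T ⟨hT0, le_refl T⟩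
    exact this
  have hwT : w T = w 0 - μ * T := by
    simp only [hgdef] at hconst
    simp at hconst
    linarith
  have hwTpos : 0 < w T := inv_pos.mpr (hpos T hT0)
  have : w T = -μ := by
    rw [hwT, hT]
    field_simp
    ring
  linarith
end

section
/- Let μ > 0, β ∈ ℝ and f_max ≥ 0 be real numbers with discriminant D = β² − 4·μ·f_max < 0. Then for every initial value y₀ ∈ ℝ the Riccati initial value problem blows up in finite time: there is no function y : ℝ → ℝ such that y(0) = y₀ and y has derivative μ·y(t)² − β·y(t) + f_max at every t ≥ 0. -/
open Filter Real Set

/-- Riccati ODE, case D < 0: for every initial value the initial value problem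
blows up in finite time, i.e. no globally defined solution on [0,∞) exists. -/
theorem riccati_negative_discriminant_blowup
    (μ β fmax : ℝ) (hμ : 0 < μ) (hf : 0 ≤ fmax)
    (hD : β ^ 2 - 4 * μ * fmax < 0) :
    ∀ y₀ : ℝ,
      ¬ ∃ y : ℝ → ℝ, y 0 = y₀ ∧
          ∀ t ≥ (0 : ℝ), HasDerivAt y (μ * y t ^ 2 - β * y t + fmax) t := by
  intro y₀ ⟨y, hy0, hy⟩
  set b : ℝ := β / (2 * μ) with hb
  set S : ℝ := 4 * μ * fmax - β ^ 2 with hS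
  have hSpos : 0 < S := by linarith
  set k : ℝ := Real.sqrt S / (2 * μ) with hk
  have hkpos : 0 < k := by positivity
  have hk2 : k ^ 2 = S / (4 * μ ^ 2) := by
    rw [hk, div_pow, Real.sq_sqrt hSpos.le]; ring
  have key : ∀ Y : ℝ, μ * Y ^ 2 - β * Y + fmax = μ * ((Y - b) ^ 2 + k ^ 2) := by
    intro Y
    rw [hk2, hb, hS]
    field_simp
    ring
  set w : ℝ → ℝ := fun t => Real.arctan ((y t - b) / k) with hw
  have hderiv : ∀ t ≥ (0 : ℝ), HasDerivAt w (μ * k) t := by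
    intro t ht
    have h1 := (((hy t ht).sub_const b).div_const k).arctan
    convert h1 using 1
    rw [key (y t)]
    have h2 : (y t - b) ^ 2 + k ^ 2 > 0 := by positivity
    rw [div_pow]
    field_simp
    ring
  set T : ℝ := π / (μ * k) with hT
  have hTpos : 0 < T := by positivity
  have hcont : ContinuousOn w (Set.Icc 0 T) := fun t ht =>
    (hderiv t ht.1).continuousAt.continuousWithinAt
  obtain ⟨c, hc, hslope⟩ := exists_hasDerivAt_eq_slope w (fun _ => μ * k) hTpos hcont
    (fun x hx => hderiv x hx.1.le)
  have heq : w T - w 0 = μ * k * T := by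
    have : μ * k = (w T - w 0) / (T - 0) := hslope
    rw [sub_zero, eq_div_iff hTpos.ne'] at this
    linarith
  have hmkT : μ * k * T = π := by
    rw [hT]; field_simp
  have h1 : w T < π / 2 := Real.arctan_lt_pi_div_two _
  have h2 : -(π / 2) < w 0 := Real.neg_pi_div_two_lt_arctan _
  linarith
end

section
/- Let μ > 0, β ∈ ℝ, y₀ ∈ ℝ with c := 2·μ·y₀ − β < 0, and let z₀ be a real number with 0 ≤ z₀ < −c/μ. Define z : ℝ → ℝ by z(t) = z₀·c·exp(c·t) / (c + μ·z₀·(1 − exp(c·t))). Then the denominator c + μ·z₀·(1 − exp(c·t)) is strictly negative for every t ≥ 0, z(0) = z₀, and z has derivative μ·z(t)² + c·z(t) at every t ≥ 0; that is, z is a globally defined solution of the Bernoulli initial value problem on [0, ∞). -/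
open Real

/-- The explicit formula z(t) = z₀·c·e^{ct} / (c + μ·z₀·(1 − e^{ct})), with
c = 2·μ·y₀ − β < 0 and 0 ≤ z₀ < −c/μ, has strictly negative denominator for
all t ≥ 0, satisfies z(0) = z₀, and is a globally defined solution of the
Bernoulli equation z' = μ·z² + c·z on [0,∞). -/
theorem bernoulli_explicit_solution
    (μ β y₀ c z₀ : ℝ) (hμ : 0 < μ) (hcdef : c = 2 * μ * y₀ - β) (hc : c < 0)
    (hz₀ : 0 ≤ z₀) (hz₀' : z₀ < -c / μ)
    (z : ℝ → ℝ)
    (hzdef : z = fun t => z₀ * c * Real.exp (c * t) /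
      (c + μ * z₀ * (1 - Real.exp (c * t)))) :
    (∀ t ≥ (0 : ℝ), c + μ * z₀ * (1 - Real.exp (c * t)) < 0) ∧
      z 0 = z₀ ∧
      ∀ t ≥ (0 : ℝ), HasDerivAt z (μ * z t ^ 2 + c * z t) t := by
  have hmul : z₀ * μ < -c := (lt_div_iff₀ hμ).mp hz₀'
  have hden : ∀ t ≥ (0 : ℝ), c + μ * z₀ * (1 - Real.exp (c * t)) < 0 := by
    intro t ht
    have he : Real.exp (c * t) ≤ 1 := by
      rw [Real.exp_le_one_iff]
      exact mul_nonpos_of_nonpos_of_nonneg hc.le ht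
    nlinarith [mul_nonneg hμ.le hz₀, Real.exp_pos (c * t)]
  refine ⟨hden, ?_, ?_⟩
  · rw [hzdef]
    simp only [mul_zero, Real.exp_zero, mul_one, sub_self, add_zero]
    exact mul_div_cancel_right₀ z₀ hc.ne
  · intro t ht
    have hD := hden t ht
    have hexp : HasDerivAt (fun s => Real.exp (c * s)) (c * Real.exp (c * t)) t := by
      simpa [mul_comm, Function.comp_def] using (Real.hasDerivAt_exp (c * t)).comp t
        ((hasDerivAt_id t).const_mul c)
    have hN : HasDerivAt (fun s => z₀ * c * Real.exp (c * s))
        (z₀ * c * (c * Real.exp (c * t))) t := hexp.const_mul (z₀ * c)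
    have hDd : HasDerivAt (fun s => c + μ * z₀ * (1 - Real.exp (c * s)))
        (μ * z₀ * (0 - c * Real.exp (c * t))) t :=
      (((hasDerivAt_const t (1 : ℝ)).sub hexp).const_mul (μ * z₀)).const_add c
    have h : HasDerivAt (fun s => z₀ * c * Real.exp (c * s) /
      (c + μ * z₀ * (1 - Real.exp (c * s)))) _ t := hN.div hDd hD.ne
    rw [hzdef]
    convert h using 1
    have hE := Real.exp_pos (c * t)
    beta_reduce
    field_simp [hD.ne]
    ring
end

section
/- Let μ > 0 and c < 0 be real numbers and let z₀ > −c/μ. Then the Bernoulli initial value problem blows up in finite time: there is no function z : ℝ → ℝ such that z(0) = z₀ and z has derivative μ·z(t)² + c·z(t) at every t ≥ 0. -/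
open Real Filter Topology

/-- Bernoulli ODE z' = μ·z² + c·z with μ > 0, c < 0 and z₀ > −c/μ:
finite-time blowup, i.e. no globally defined solution on [0,∞) exists. -/
theorem bernoulli_large_initial_data_blowup
    (μ c z₀ : ℝ) (hμ : 0 < μ) (hc : c < 0) (hz₀ : -c / μ < z₀) :
    ¬ ∃ z : ℝ → ℝ, z 0 = z₀ ∧
        ∀ t ≥ (0 : ℝ), HasDerivAt z (μ * z t ^ 2 + c * z t) t := by
  rintro ⟨z, hz0, hz⟩
  have hcont : ∀ t ≥ (0:ℝ), ContinuousAt z t := fun t ht => (hz t ht).continuousAt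
  have ha : 0 < -c / μ := div_pos (by linarith) hμ
  have hz₀pos : 0 < z₀ := ha.trans hz₀
  have hμz₀c : 0 < μ * z₀ + c := by
    rw [div_lt_iff₀ hμ] at hz₀; nlinarith
  -- Step A: the solution stays above z₀ on [0, ∞)
  have stepA : ∀ t ≥ (0:ℝ), z₀ ≤ z t := by
    by_contra h
    push_neg at h
    obtain ⟨t₁, ht₁, hlt⟩ := h
    set S := {t : ℝ | t ∈ Set.Icc 0 t₁ ∧ z₀ ≤ z t} with hS
    have h0S : (0:ℝ) ∈ S := ⟨⟨le_refl 0, ht₁⟩, hz0.ge⟩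
    have hbdd : BddAbove S := ⟨t₁, fun x hx => hx.1.2⟩
    have hne : S.Nonempty := ⟨0, h0S⟩
    set s := sSup S with hsdef
    have hs0 : 0 ≤ s := le_csSup hbdd h0S
    have hst₁ : s ≤ t₁ := csSup_le hne fun x hx => hx.1.2
    have hclose : s ∈ closure S := csSup_mem_closure hne hbdd
    have hzs : z₀ ≤ z s := by
      have htend : Filter.Tendsto z (𝓝[S] s) (𝓝 (z s)) :=
        (hcont s hs0).continuousWithinAt
      have hne' : (𝓝[S] s).NeBot := mem_closure_iff_nhdsWithin_neBot.1 hclose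
      exact ge_of_tendsto htend (eventually_nhdsWithin_of_forall fun x hx => hx.2)
    have hslt : s < t₁ := lt_of_le_of_ne hst₁ (fun h => by rw [h] at hzs; linarith)
    have hzspos : 0 < z s := hz₀pos.trans_le hzs
    have hd : 0 < μ * z s ^ 2 + c * z s := by
      have h2 : 0 < μ * z s + c := by nlinarith
      nlinarith [mul_pos hzspos h2]
    have hslope := hasDerivAt_iff_tendsto_slope.1 (hz s hs0)
    have hev : ∀ᶠ t in 𝓝[>] s, 0 < slope z s t :=
      (hslope.eventually (eventually_gt_nhds hd)).filter_mono
        (nhdsWithin_mono s fun x hx => ne_of_gt hx)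
    have hIoo : Set.Ioo s t₁ ∈ 𝓝[>] s := Ioo_mem_nhdsGT_of_mem ⟨le_refl s, hslt⟩
    obtain ⟨t, hslopet, hts, htt₁⟩ := (hev.and (Filter.eventually_mem_set.2 hIoo)).exists
    have hzt : z s < z t := by
      have hts' : 0 < t - s := sub_pos.2 hts
      have : 0 < z t - z s := by
        have := mul_pos hslopet hts'
        rwa [slope_def_field, div_mul_cancel₀ _ (ne_of_gt hts')] at this
      linarith
    have htS : t ∈ S := ⟨⟨hs0.trans hts.le, htt₁.le⟩, hzs.trans hzt.le⟩
    exact absurd (le_csSup hbdd htS) (not_le.2 hts)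
  have hzpos : ∀ t ≥ (0:ℝ), 0 < z t := fun t ht => hz₀pos.trans_le (stepA t ht)
  -- Step B: w(t) = 1/z(t) + ε t is antitone
  set ε := μ + c / z₀ with hεdef
  have hε : 0 < ε := by
    have : ε = (μ * z₀ + c) / z₀ := by
      rw [hεdef, add_div, mul_div_assoc, div_self (ne_of_gt hz₀pos), mul_one]
    rw [this]; exact div_pos hμz₀c hz₀pos
  set φ : ℝ → ℝ := fun t => (z t)⁻¹ + ε * t with hφdef
  have hφderiv : ∀ t ≥ (0:ℝ), HasDerivAt φ
      (-(μ * z t ^ 2 + c * z t) / z t ^ 2 + ε) t := by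
    intro t ht
    have h1 : HasDerivAt (fun u => (z u)⁻¹) (-(μ * z t ^ 2 + c * z t) / z t ^ 2) t :=
      (hz t ht).inv (ne_of_gt (hzpos t ht))
    have h2 : HasDerivAt (fun u : ℝ => ε * u) ε t := by
      simpa using (hasDerivAt_id t).const_mul ε
    exact h1.add h2
  have hφnonpos : ∀ t ≥ (0:ℝ), -(μ * z t ^ 2 + c * z t) / z t ^ 2 + ε ≤ 0 := by
    intro t ht
    have hzt := hzpos t ht
    have hzt₀ := stepA t ht
    have h1 : -(μ * z t ^ 2 + c * z t) / z t ^ 2 = -μ - c / z t := by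
      field_simp
      ring
    rw [h1, hεdef]
    have h2 : c / z₀ ≤ c / z t := by
      rw [div_le_div_iff₀ hz₀pos hzt]
      nlinarith
    linarith
  have hφanti : AntitoneOn φ (Set.Ici (0:ℝ)) := by
    apply antitoneOn_of_deriv_nonpos (convex_Ici 0)
    · exact fun t ht => ((hφderiv t ht).continuousAt.continuousWithinAt)
    · intro t ht
      rw [interior_Ici] at ht
      exact ((hφderiv t (le_of_lt ht)).differentiableAt).differentiableWithinAt
    · intro t ht
      rw [interior_Ici] at ht
      rw [(hφderiv t (le_of_lt ht)).deriv]
      exact hφnonpos t (le_of_lt ht)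
  -- Step C: contradiction at a large time
  set T := (z₀⁻¹ + 1) / ε with hTdef
  have hT0 : 0 ≤ T := le_of_lt (div_pos (by positivity) hε)
  have hεT : ε * T = z₀⁻¹ + 1 := by
    rw [hTdef, mul_div_cancel₀ _ (ne_of_gt hε)]
  have h := hφanti (Set.self_mem_Ici) hT0 hT0
  have hφ0 : φ 0 = z₀⁻¹ := by simp [hφdef, hz0]
  have hφT : φ T = (z T)⁻¹ + ε * T := rfl
  rw [hφ0, hφT, hεT] at h
  have : 0 < (z T)⁻¹ := inv_pos.2 (hzpos T hT0)
  linarith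
end

section
/- Let χ : ℝ → ℝ be the C² cutoff defined by χ(t) = H((t + 5)/5) for t ∈ [−5, 0], χ(t) = 1 for t ∈ [0, 1], χ(t) = H((6 − t)/5) for t ∈ [1, 6], and χ(t) = 0 otherwise, where H(t) = 6t⁵ − 15t⁴ + 10t³. Let u : ℝ → ℝ be twice continuously differentiable and 1-periodic. Then, writing Eu = χ·u, the function Eu is twice continuously differentiable with support contained in [−5, 6], and ∫_ℝ ((Eu)(x)² + ((Eu)'(x))² + ((Eu)''(x))²) dx ≤ 11·[ (1 + 2·(3/8)² + 3·(2√3/15)²)·∫₀¹ u(x)² dx + (2 + 12·(3/8)²)·∫₀¹ (u'(x))² dx + 3·∫₀¹ (u''(x))² dx ]. -/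
open Real Set MeasureTheory intervalIntegral

/-- The quintic Hermite polynomial H(t) = 6t⁵ − 15t⁴ + 10t³. -/
noncomputable def hermiteQuintic (t : ℝ) : ℝ := 6 * t ^ 5 - 15 * t ^ 4 + 10 * t ^ 3

/-- The compactly supported C² cutoff χ built from the quintic Hermite polynomial:
χ(t) = H((t+5)/5) on [−5,0], χ ≡ 1 on [0,1], χ(t) = H((6−t)/5) on [1,6],
and χ ≡ 0 outside [−5,6]. -/
noncomputable def cutoffChi (t : ℝ) : ℝ :=
  if t < -5 then 0
  else if t ≤ 0 then hermiteQuintic ((t + 5) / 5)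
  else if t ≤ 1 then 1
  else if t ≤ 6 then hermiteQuintic ((6 - t) / 5)
  else 0

noncomputable def hermiteD1 (t : ℝ) : ℝ := 30 * t ^ 4 - 60 * t ^ 3 + 30 * t ^ 2
noncomputable def hermiteD2 (t : ℝ) : ℝ := 120 * t ^ 3 - 180 * t ^ 2 + 60 * t

/-- First derivative of the cutoff. -/
noncomputable def cutoffChi' (t : ℝ) : ℝ :=
  if t < -5 then 0
  else if t ≤ 0 then hermiteD1 ((t + 5) / 5) / 5
  else if t ≤ 1 then 0
  else if t ≤ 6 then -(hermiteD1 ((6 - t) / 5) / 5)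
  else 0

/-- Second derivative of the cutoff. -/
noncomputable def cutoffChi'' (t : ℝ) : ℝ :=
  if t < -5 then 0
  else if t ≤ 0 then hermiteD2 ((t + 5) / 5) / 25
  else if t ≤ 1 then 0
  else if t ≤ 6 then hermiteD2 ((6 - t) / 5) / 25
  else 0

lemma hermiteQuintic_hasDerivAt (t : ℝ) : HasDerivAt hermiteQuintic (hermiteD1 t) t := by
  unfold hermiteQuintic hermiteD1
  have h := (((hasDerivAt_pow 5 t).const_mul (6:ℝ)).sub ((hasDerivAt_pow 4 t).const_mul (15:ℝ))).add
    ((hasDerivAt_pow 3 t).const_mul (10:ℝ))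
  refine h.congr_deriv ?_
  norm_num
  ring

lemma hermiteD1_hasDerivAt (t : ℝ) : HasDerivAt hermiteD1 (hermiteD2 t) t := by
  unfold hermiteD1 hermiteD2
  have h := (((hasDerivAt_pow 4 t).const_mul (30:ℝ)).sub ((hasDerivAt_pow 3 t).const_mul (60:ℝ))).add
    ((hasDerivAt_pow 2 t).const_mul (30:ℝ))
  refine h.congr_deriv ?_
  norm_num
  ring

lemma hasDerivAt_of_eq_on_Ioo {f g : ℝ → ℝ} {l r t d : ℝ} (hl : l < t) (hr : t < r)
    (hg : HasDerivAt g d t) (h1 : ∀ x ∈ Set.Ioo l r, f x = g x) : HasDerivAt f d t := by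
  apply hg.congr_of_eventuallyEq
  filter_upwards [Ioo_mem_nhds hl hr] with x hx using h1 x hx

lemma continuousAt_of_eq_on_Ioo {f g : ℝ → ℝ} {l r t : ℝ} (hl : l < t) (hr : t < r)
    (hg : ContinuousAt g t) (h1 : ∀ x ∈ Set.Ioo l r, f x = g x) : ContinuousAt f t := by
  apply hg.congr
  filter_upwards [Ioo_mem_nhds hl hr] with x hx using (h1 x hx).symm

lemma hasDerivAt_glue {f g h : ℝ → ℝ} {a d : ℝ}
    (hg : HasDerivAt g d a) (hh : HasDerivAt h d a)
    (h1 : ∀ x ∈ Set.Ioc (a-1) a, f x = g x) (h2 : ∀ x ∈ Set.Ico a (a+1), f x = h x) :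
    HasDerivAt f d a := by
  have hl : HasDerivWithinAt f d (Set.Iic a) a := by
    refine (hg.hasDerivWithinAt).congr_of_eventuallyEq ?_ (h1 a ⟨by linarith, le_rfl⟩)
    filter_upwards [Ioc_mem_nhdsLE_of_mem (⟨by linarith, le_rfl⟩ : a ∈ Set.Ioc (a-1) a)] with x hx
      using h1 x hx
  have hr : HasDerivWithinAt f d (Set.Ici a) a := by
    refine (hh.hasDerivWithinAt).congr_of_eventuallyEq ?_ (h2 a ⟨le_rfl, by linarith⟩)
    filter_upwards [Ico_mem_nhdsGE_of_mem (⟨le_rfl, by linarith⟩ : a ∈ Set.Ico a (a+1))] with x hx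
      using h2 x hx
  have := hl.union hr
  rwa [Set.Iic_union_Ici, hasDerivWithinAt_univ] at this

lemma continuousAt_glue {f g h : ℝ → ℝ} {a : ℝ}
    (hg : ContinuousAt g a) (hh : ContinuousAt h a)
    (h1 : ∀ x ∈ Set.Ioc (a-1) a, f x = g x) (h2 : ∀ x ∈ Set.Ico a (a+1), f x = h x) :
    ContinuousAt f a := by
  have hl : ContinuousWithinAt f (Set.Iic a) a := by
    refine (hg.continuousWithinAt).congr_of_eventuallyEq ?_ (h1 a ⟨by linarith, le_rfl⟩)
    filter_upwards [Ioc_mem_nhdsLE_of_mem (⟨by linarith, le_rfl⟩ : a ∈ Set.Ioc (a-1) a)] with x hx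
      using h1 x hx
  have hr : ContinuousWithinAt f (Set.Ici a) a := by
    refine (hh.continuousWithinAt).congr_of_eventuallyEq ?_ (h2 a ⟨le_rfl, by linarith⟩)
    filter_upwards [Ico_mem_nhdsGE_of_mem (⟨le_rfl, by linarith⟩ : a ∈ Set.Ico a (a+1))] with x hx
      using h2 x hx
  have := hl.union hr
  rwa [Set.Iic_union_Ici, continuousWithinAt_univ] at this

lemma piecewise_hasDerivAt {a b c a' b' c' : ℝ → ℝ}
    (ha : ∀ t, HasDerivAt a (a' t) t) (hb : ∀ t, HasDerivAt b (b' t) t)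
    (hc : ∀ t, HasDerivAt c (c' t) t)
    (va5 : a (-5) = 0) (va0 : a 0 = b 0) (vb1 : b 1 = c 1) (vc6 : c 6 = 0)
    (da5 : a' (-5) = 0) (da0 : a' 0 = b' 0) (db1 : b' 1 = c' 1) (dc6 : c' 6 = 0)
    (t : ℝ) :
    HasDerivAt (fun s => if s < -5 then (0:ℝ) else if s ≤ 0 then a s else if s ≤ 1 then b s
        else if s ≤ 6 then c s else 0)
      (if t < -5 then (0:ℝ) else if t ≤ 0 then a' t else if t ≤ 1 then b' t
        else if t ≤ 6 then c' t else 0) t := by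
  set F : ℝ → ℝ := fun s => if s < -5 then (0:ℝ) else if s ≤ 0 then a s else if s ≤ 1 then b s
        else if s ≤ 6 then c s else 0 with hF
  rcases lt_trichotomy t (-5) with h | h | h
  · rw [if_pos h]
    exact hasDerivAt_of_eq_on_Ioo (show t - 1 < t by linarith) h (hasDerivAt_const t 0)
      (fun x hx => by simp only [hF, if_pos hx.2])
  · subst h
    rw [if_neg (lt_irrefl _), if_pos (by norm_num : (-5:ℝ) ≤ 0), da5]
    refine hasDerivAt_glue (hasDerivAt_const _ 0) (da5 ▸ ha (-5)) ?_ ?_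
    · rintro x ⟨_, hx2⟩
      rcases hx2.eq_or_lt with rfl | hlt
      · simp only [hF, if_neg (lt_irrefl _), if_pos (by norm_num : (-5:ℝ) ≤ 0), va5]
      · simp only [hF, if_pos hlt]
    · rintro x ⟨hx1, hx2⟩
      simp only [hF, if_neg (not_lt.mpr hx1), if_pos (by linarith : x ≤ 0)]
  rcases lt_trichotomy t 0 with h0 | h0 | h0
  · rw [if_neg (not_lt.mpr h.le), if_pos h0.le]
    exact hasDerivAt_of_eq_on_Ioo h h0 (ha t)
      (fun x hx => by simp only [hF, if_neg (not_lt.mpr hx.1.le), if_pos hx.2.le])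
  · subst h0
    rw [if_neg (by norm_num), if_pos le_rfl]
    refine hasDerivAt_glue (ha 0) (da0 ▸ hb 0) ?_ ?_
    · rintro x ⟨hx1, hx2⟩
      simp only [hF, if_neg (by linarith : ¬ x < -5), if_pos hx2]
    · rintro x ⟨hx1, hx2⟩
      rcases hx1.eq_or_lt with rfl | hlt
      · simp only [hF, if_neg (by norm_num : ¬ (0:ℝ) < -5), if_pos le_rfl, va0]
      · simp only [hF, if_neg (by linarith : ¬ x < -5), if_neg (not_le.mpr hlt),
          if_pos (by linarith : x ≤ 1)]
  rcases lt_trichotomy t 1 with h1 | h1 | h1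
  · rw [if_neg (by linarith), if_neg (not_le.mpr h0), if_pos h1.le]
    refine hasDerivAt_of_eq_on_Ioo h0 h1 (hb t) ?_
    rintro x ⟨hx1, hx2⟩
    simp only [hF]
    rw [if_neg (by linarith), if_neg (by linarith), if_pos hx2.le]
  · subst h1
    rw [if_neg (by norm_num), if_neg (by norm_num), if_pos le_rfl]
    refine hasDerivAt_glue (hb 1) (db1 ▸ hc 1) ?_ ?_
    · rintro x ⟨hx1, hx2⟩
      simp only [hF]
      rw [if_neg (by linarith), if_neg (by linarith), if_pos hx2]
    · rintro x ⟨hx1, hx2⟩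
      rcases hx1.eq_or_lt with rfl | hlt
      · simp only [hF, if_neg (by norm_num : ¬ (1:ℝ) < -5), if_neg (by norm_num : ¬ (1:ℝ) ≤ 0),
          if_pos le_rfl, vb1]
      · simp only [hF]
        rw [if_neg (by linarith), if_neg (by linarith), if_neg (not_le.mpr hlt),
          if_pos (by linarith)]
  rcases lt_trichotomy t 6 with h6 | h6 | h6
  · rw [if_neg (by linarith), if_neg (by linarith), if_neg (not_le.mpr h1), if_pos h6.le]
    refine hasDerivAt_of_eq_on_Ioo h1 h6 (hc t) ?_
    rintro x ⟨hx1, hx2⟩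
    simp only [hF]
    rw [if_neg (by linarith), if_neg (by linarith), if_neg (by linarith), if_pos hx2.le]
  · subst h6
    rw [if_neg (by norm_num), if_neg (by norm_num), if_neg (by norm_num), if_pos le_rfl, dc6]
    refine hasDerivAt_glue (dc6 ▸ hc 6) (hasDerivAt_const _ 0) ?_ ?_
    · rintro x ⟨hx1, hx2⟩
      simp only [hF]
      rw [if_neg (by linarith), if_neg (by linarith), if_neg (by linarith), if_pos hx2]
    · rintro x ⟨hx1, hx2⟩
      rcases hx1.eq_or_lt with rfl | hlt
      · simp only [hF, if_neg (by norm_num : ¬ (6:ℝ) < -5), if_neg (by norm_num : ¬ (6:ℝ) ≤ 0),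
          if_neg (by norm_num : ¬ (6:ℝ) ≤ 1), if_pos le_rfl, vc6]
      · simp only [hF]
        rw [if_neg (by linarith), if_neg (by linarith), if_neg (by linarith),
          if_neg (not_le.mpr hlt)]
  · rw [if_neg (by linarith), if_neg (by linarith), if_neg (by linarith), if_neg (not_le.mpr h6)]
    refine hasDerivAt_of_eq_on_Ioo h6 (show t < t + 1 by linarith) (hasDerivAt_const t 0) ?_
    rintro x ⟨hx1, hx2⟩
    simp only [hF]
    rw [if_neg (by linarith), if_neg (by linarith), if_neg (by linarith), if_neg (by linarith)]

lemma piecewise_continuousAt {a b c : ℝ → ℝ}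
    (ha : Continuous a) (hb : Continuous b) (hc : Continuous c)
    (va5 : a (-5) = 0) (va0 : a 0 = b 0) (vb1 : b 1 = c 1) (vc6 : c 6 = 0)
    (t : ℝ) :
    ContinuousAt (fun s => if s < -5 then (0:ℝ) else if s ≤ 0 then a s else if s ≤ 1 then b s
        else if s ≤ 6 then c s else 0) t := by
  set F : ℝ → ℝ := fun s => if s < -5 then (0:ℝ) else if s ≤ 0 then a s else if s ≤ 1 then b s
        else if s ≤ 6 then c s else 0 with hF
  rcases lt_trichotomy t (-5) with h | h | h
  · exact continuousAt_of_eq_on_Ioo (g := fun _ => (0:ℝ)) (show t - 1 < t by linarith) h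
      continuousAt_const (fun x hx => by simp only [hF, if_pos hx.2])
  · subst h
    refine continuousAt_glue (g := fun _ => (0:ℝ)) continuousAt_const ha.continuousAt ?_ ?_
    · rintro x ⟨_, hx2⟩
      rcases hx2.eq_or_lt with rfl | hlt
      · simp only [hF, if_neg (lt_irrefl _), if_pos (by norm_num : (-5:ℝ) ≤ 0), va5]
      · simp only [hF, if_pos hlt]
    · rintro x ⟨hx1, hx2⟩
      simp only [hF, if_neg (not_lt.mpr hx1), if_pos (by linarith : x ≤ 0)]
  rcases lt_trichotomy t 0 with h0 | h0 | h0
  · exact continuousAt_of_eq_on_Ioo h h0 ha.continuousAt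
      (fun x hx => by simp only [hF, if_neg (not_lt.mpr hx.1.le), if_pos hx.2.le])
  · subst h0
    refine continuousAt_glue ha.continuousAt hb.continuousAt ?_ ?_
    · rintro x ⟨hx1, hx2⟩
      simp only [hF, if_neg (by linarith : ¬ x < -5), if_pos hx2]
    · rintro x ⟨hx1, hx2⟩
      rcases hx1.eq_or_lt with rfl | hlt
      · simp only [hF, if_neg (by norm_num : ¬ (0:ℝ) < -5), if_pos le_rfl, va0]
      · simp only [hF, if_neg (by linarith : ¬ x < -5), if_neg (not_le.mpr hlt),
          if_pos (by linarith : x ≤ 1)]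
  rcases lt_trichotomy t 1 with h1 | h1 | h1
  · refine continuousAt_of_eq_on_Ioo h0 h1 hb.continuousAt ?_
    rintro x ⟨hx1, hx2⟩
    simp only [hF]
    rw [if_neg (by linarith), if_neg (by linarith), if_pos hx2.le]
  · subst h1
    refine continuousAt_glue hb.continuousAt hc.continuousAt ?_ ?_
    · rintro x ⟨hx1, hx2⟩
      simp only [hF]
      rw [if_neg (by linarith), if_neg (by linarith), if_pos hx2]
    · rintro x ⟨hx1, hx2⟩
      rcases hx1.eq_or_lt with rfl | hlt
      · simp only [hF, if_neg (by norm_num : ¬ (1:ℝ) < -5), if_neg (by norm_num : ¬ (1:ℝ) ≤ 0),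
          if_pos le_rfl, vb1]
      · simp only [hF]
        rw [if_neg (by linarith), if_neg (by linarith), if_neg (not_le.mpr hlt),
          if_pos (by linarith)]
  rcases lt_trichotomy t 6 with h6 | h6 | h6
  · refine continuousAt_of_eq_on_Ioo h1 h6 hc.continuousAt ?_
    rintro x ⟨hx1, hx2⟩
    simp only [hF]
    rw [if_neg (by linarith), if_neg (by linarith), if_neg (by linarith), if_pos hx2.le]
  · subst h6
    refine continuousAt_glue (h := fun _ => (0:ℝ)) hc.continuousAt continuousAt_const ?_ ?_
    · rintro x ⟨hx1, hx2⟩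
      simp only [hF]
      rw [if_neg (by linarith), if_neg (by linarith), if_neg (by linarith), if_pos hx2]
    · rintro x ⟨hx1, hx2⟩
      rcases hx1.eq_or_lt with rfl | hlt
      · simp only [hF, if_neg (by norm_num : ¬ (6:ℝ) < -5), if_neg (by norm_num : ¬ (6:ℝ) ≤ 0),
          if_neg (by norm_num : ¬ (6:ℝ) ≤ 1), if_pos le_rfl, vc6]
      · simp only [hF]
        rw [if_neg (by linarith), if_neg (by linarith), if_neg (by linarith),
          if_neg (not_le.mpr hlt)]
  · refine continuousAt_of_eq_on_Ioo (g := fun _ => (0:ℝ)) h6 (show t < t + 1 by linarith)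
      continuousAt_const ?_
    rintro x ⟨hx1, hx2⟩
    simp only [hF]
    rw [if_neg (by linarith), if_neg (by linarith), if_neg (by linarith), if_neg (by linarith)]

lemma hasDerivAt_A (t : ℝ) :
    HasDerivAt (fun x => hermiteQuintic ((x + 5) / 5)) (hermiteD1 ((t + 5) / 5) / 5) t := by
  have inner : HasDerivAt (fun x : ℝ => (x + 5) / 5) (1 / 5) t := by
    simpa using ((hasDerivAt_id t).add_const (5:ℝ)).div_const 5
  have h := (hermiteQuintic_hasDerivAt ((t + 5) / 5)).comp t inner
  have e : hermiteD1 ((t + 5) / 5) * (1 / 5) = hermiteD1 ((t + 5) / 5) / 5 := by ring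
  rw [e] at h
  exact h

lemma hasDerivAt_C (t : ℝ) :
    HasDerivAt (fun x => hermiteQuintic ((6 - x) / 5)) (-(hermiteD1 ((6 - t) / 5) / 5)) t := by
  have inner : HasDerivAt (fun x : ℝ => (6 - x) / 5) (-1 / 5) t := by
    simpa using ((hasDerivAt_id t).const_sub (6:ℝ)).div_const 5
  have h := (hermiteQuintic_hasDerivAt ((6 - t) / 5)).comp t inner
  have e : hermiteD1 ((6 - t) / 5) * (-1 / 5) = -(hermiteD1 ((6 - t) / 5) / 5) := by ring
  rw [e] at h
  exact h

lemma hasDerivAt_A' (t : ℝ) :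
    HasDerivAt (fun x => hermiteD1 ((x + 5) / 5) / 5) (hermiteD2 ((t + 5) / 5) / 25) t := by
  have inner : HasDerivAt (fun x : ℝ => (x + 5) / 5) (1 / 5) t := by
    simpa using ((hasDerivAt_id t).add_const (5:ℝ)).div_const 5
  have h := ((hermiteD1_hasDerivAt ((t + 5) / 5)).comp t inner).div_const 5
  have e : hermiteD2 ((t + 5) / 5) * (1 / 5) / 5 = hermiteD2 ((t + 5) / 5) / 25 := by ring
  rw [e] at h
  exact h

lemma hasDerivAt_C' (t : ℝ) :
    HasDerivAt (fun x => -(hermiteD1 ((6 - x) / 5) / 5)) (hermiteD2 ((6 - t) / 5) / 25) t := by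
  have inner : HasDerivAt (fun x : ℝ => (6 - x) / 5) (-1 / 5) t := by
    simpa using ((hasDerivAt_id t).const_sub (6:ℝ)).div_const 5
  have h := (((hermiteD1_hasDerivAt ((6 - t) / 5)).comp t inner).div_const 5).neg
  have e : -(hermiteD2 ((6 - t) / 5) * (-1 / 5) / 5) = hermiteD2 ((6 - t) / 5) / 25 := by ring
  rw [e] at h
  exact h

lemma cutoffChi_hasDerivAt (t : ℝ) : HasDerivAt cutoffChi (cutoffChi' t) t := by
  have h := piecewise_hasDerivAt (a := fun x => hermiteQuintic ((x + 5) / 5))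
    (b := fun _ => (1:ℝ)) (c := fun x => hermiteQuintic ((6 - x) / 5))
    (a' := fun x => hermiteD1 ((x + 5) / 5) / 5) (b' := fun _ => (0:ℝ))
    (c' := fun x => -(hermiteD1 ((6 - x) / 5) / 5))
    hasDerivAt_A (fun t => hasDerivAt_const t 1) hasDerivAt_C
    (by norm_num [hermiteQuintic]) (by norm_num [hermiteQuintic])
    (by norm_num [hermiteQuintic]) (by norm_num [hermiteQuintic])
    (by norm_num [hermiteD1]) (by norm_num [hermiteD1])
    (by norm_num [hermiteD1]) (by norm_num [hermiteD1]) t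
  exact h

lemma cutoffChi'_hasDerivAt (t : ℝ) : HasDerivAt cutoffChi' (cutoffChi'' t) t := by
  have h := piecewise_hasDerivAt (a := fun x => hermiteD1 ((x + 5) / 5) / 5)
    (b := fun _ => (0:ℝ)) (c := fun x => -(hermiteD1 ((6 - x) / 5) / 5))
    (a' := fun x => hermiteD2 ((x + 5) / 5) / 25) (b' := fun _ => (0:ℝ))
    (c' := fun x => hermiteD2 ((6 - x) / 5) / 25)
    hasDerivAt_A' (fun t => hasDerivAt_const t 0) hasDerivAt_C'
    (by norm_num [hermiteD1]) (by norm_num [hermiteD1])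
    (by norm_num [hermiteD1]) (by norm_num [hermiteD1])
    (by norm_num [hermiteD2]) (by norm_num [hermiteD2])
    (by norm_num [hermiteD2]) (by norm_num [hermiteD2]) t
  exact h

lemma cutoffChi''_continuous : Continuous cutoffChi'' := by
  rw [continuous_iff_continuousAt]
  intro t
  have h := piecewise_continuousAt (a := fun x => hermiteD2 ((x + 5) / 5) / 25)
    (b := fun _ => (0:ℝ)) (c := fun x => hermiteD2 ((6 - x) / 5) / 25)
    (by unfold hermiteD2; fun_prop) continuous_const (by unfold hermiteD2; fun_prop)
    (by norm_num [hermiteD2]) (by norm_num [hermiteD2])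
    (by norm_num [hermiteD2]) (by norm_num [hermiteD2]) t
  exact h

lemma hermiteQuintic_bounds {s : ℝ} (h0 : 0 ≤ s) (h1 : s ≤ 1) :
    0 ≤ hermiteQuintic s ∧ hermiteQuintic s ≤ 1 := by
  unfold hermiteQuintic
  constructor
  · nlinarith [pow_nonneg h0 3, sq_nonneg (1 - s), sq_nonneg s,
      mul_nonneg (pow_nonneg h0 3) (sq_nonneg (1-s))]
  · nlinarith [pow_nonneg (by linarith : (0:ℝ) ≤ 1 - s) 3, sq_nonneg s, sq_nonneg (1-s),
      mul_nonneg (pow_nonneg (by linarith : (0:ℝ) ≤ 1 - s) 3) (sq_nonneg s)]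

lemma hermiteD1_bounds {s : ℝ} (h0 : 0 ≤ s) (h1 : s ≤ 1) :
    0 ≤ hermiteD1 s ∧ hermiteD1 s ≤ 15 / 8 := by
  unfold hermiteD1
  constructor
  · nlinarith [sq_nonneg (s * (1 - s))]
  · have hx0 : (0:ℝ) ≤ s * (1 - s) := mul_nonneg h0 (by linarith)
    have hx4 : s * (1 - s) ≤ 1/4 := by nlinarith [sq_nonneg (s - 1/2)]
    nlinarith [mul_nonneg (by linarith : (0:ℝ) ≤ 1/4 - s*(1-s))
      (by linarith : (0:ℝ) ≤ 1/4 + s*(1-s))]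

lemma hermiteD2_sq_bound {s : ℝ} (h0 : 0 ≤ s) (h1 : s ≤ 1) :
    hermiteD2 s ^ 2 ≤ 100 / 3 := by
  unfold hermiteD2
  nlinarith [mul_nonneg (sq_nonneg ((s - 1/2)^2 - 1/12))
      (by nlinarith [sq_nonneg (s - 1/2)] : (0:ℝ) ≤ 4/3 - 4*(s-1/2)^2)]

lemma cutoffChi_sq_le (t : ℝ) : cutoffChi t ^ 2 ≤ 1 := by
  unfold cutoffChi
  split_ifs with h1 h2 h3 h4
  · norm_num
  · have h := hermiteQuintic_bounds (s := (t+5)/5) (by push_neg at h1; linarith) (by linarith)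
    nlinarith [h.1, h.2]
  · norm_num
  · have h := hermiteQuintic_bounds (s := (6-t)/5) (by linarith) (by push_neg at h3; linarith)
    nlinarith [h.1, h.2]
  · norm_num

lemma cutoffChi'_sq_le (t : ℝ) : cutoffChi' t ^ 2 ≤ (3/8:ℝ)^2 := by
  unfold cutoffChi'
  split_ifs with h1 h2 h3 h4
  · norm_num
  · have h := hermiteD1_bounds (s := (t+5)/5) (by push_neg at h1; linarith) (by linarith)
    nlinarith [h.1, h.2]
  · norm_num
  · have h := hermiteD1_bounds (s := (6-t)/5) (by linarith) (by push_neg at h3; linarith)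
    nlinarith [h.1, h.2]
  · norm_num

lemma cutoffChi''_sq_le (t : ℝ) : cutoffChi'' t ^ 2 ≤ 4/75 := by
  unfold cutoffChi''
  split_ifs with h1 h2 h3 h4
  · norm_num
  · have h := hermiteD2_sq_bound (s := (t+5)/5) (by push_neg at h1; linarith) (by linarith)
    nlinarith [h]
  · norm_num
  · have h := hermiteD2_sq_bound (s := (6-t)/5) (by linarith) (by push_neg at h3; linarith)
    nlinarith [h]
  · norm_num

lemma cutoffChi_eq_zero {x : ℝ} (hx : x ≤ -5 ∨ 6 < x) : cutoffChi x = 0 := by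
  unfold cutoffChi
  rcases hx with hx | hx
  · rcases hx.eq_or_lt with rfl | h
    · rw [if_neg (lt_irrefl _), if_pos (by norm_num)]
      norm_num [hermiteQuintic]
    · rw [if_pos h]
  · rw [if_neg (by linarith), if_neg (by linarith), if_neg (by linarith), if_neg (by linarith)]

lemma cutoffChi'_eq_zero {x : ℝ} (hx : x ≤ -5 ∨ 6 < x) : cutoffChi' x = 0 := by
  unfold cutoffChi'
  rcases hx with hx | hx
  · rcases hx.eq_or_lt with rfl | h
    · rw [if_neg (lt_irrefl _), if_pos (by norm_num)]
      norm_num [hermiteD1]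
    · rw [if_pos h]
  · rw [if_neg (by linarith), if_neg (by linarith), if_neg (by linarith), if_neg (by linarith)]

lemma cutoffChi''_eq_zero {x : ℝ} (hx : x ≤ -5 ∨ 6 < x) : cutoffChi'' x = 0 := by
  unfold cutoffChi''
  rcases hx with hx | hx
  · rcases hx.eq_or_lt with rfl | h
    · rw [if_neg (lt_irrefl _), if_pos (by norm_num)]
      norm_num [hermiteD2]
    · rw [if_pos h]
  · rw [if_neg (by linarith), if_neg (by linarith), if_neg (by linarith), if_neg (by linarith)]

lemma pointwise_sq_bound {a b c A B C : ℝ} (ha : a^2 ≤ 1) (hb : b^2 ≤ (3/8:ℝ)^2)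
    (hc : c^2 ≤ 4/75) :
    (a*A)^2 + (b*A + a*B)^2 + (c*A + 2*(b*B) + a*C)^2 ≤
      (1 + 2*(3/8:ℝ)^2 + 3*(4/75)) * A^2 + (2 + 12*(3/8:ℝ)^2) * B^2 + 3 * C^2 := by
  have h1 : (a*A)^2 ≤ A^2 := by nlinarith [sq_nonneg A, sq_nonneg (a*A)]
  have h2 : (b*A + a*B)^2 ≤ 2*(3/8:ℝ)^2*A^2 + 2*B^2 := by
    nlinarith [sq_nonneg (b*A - a*B), sq_nonneg A, sq_nonneg B, sq_nonneg (a*B), sq_nonneg (b*A)]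
  have h3 : (c*A + 2*(b*B) + a*C)^2 ≤ 3*(4/75)*A^2 + 12*(3/8:ℝ)^2*B^2 + 3*C^2 := by
    nlinarith [sq_nonneg (c*A - 2*(b*B)), sq_nonneg (c*A - a*C), sq_nonneg (2*(b*B) - a*C),
      sq_nonneg A, sq_nonneg B, sq_nonneg C, sq_nonneg (c*A), sq_nonneg (b*B), sq_nonneg (a*C)]
  nlinarith [h1, h2, h3]

lemma periodic_deriv' {g : ℝ → ℝ} (hg : Function.Periodic g 1) :
    Function.Periodic (deriv g) 1 := by
  intro x
  rw [← deriv_comp_add_const g 1 x, show (fun y => g (y + 1)) = g from funext hg]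

lemma periodic_integral_eleven {g : ℝ → ℝ} (hg : Function.Periodic g 1) (hcont : Continuous g) :
    ∫ x in (-5:ℝ)..6, g x = 11 * ∫ x in (0:ℝ)..1, g x := by
  have hint : ∀ t₁ t₂ : ℝ, IntervalIntegrable g MeasureSpace.volume t₁ t₂ :=
    fun t₁ t₂ => hcont.intervalIntegrable _ _
  have h1 := hg.intervalIntegral_add_zsmul_eq 11 (-5) hint
  have h2 := hg.intervalIntegral_add_eq (-5) 0
  norm_num at h1 h2
  rw [h1, h2]

lemma cutoffChi_contDiff : ContDiff ℝ 2 cutoffChi := by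
  have e1 : deriv cutoffChi = cutoffChi' := funext fun x => (cutoffChi_hasDerivAt x).deriv
  have e2 : deriv cutoffChi' = cutoffChi'' := funext fun x => (cutoffChi'_hasDerivAt x).deriv
  rw [show (2 : WithTop ℕ∞) = 1 + 1 from rfl, contDiff_succ_iff_deriv]
  refine ⟨fun x => (cutoffChi_hasDerivAt x).differentiableAt, by simp, ?_⟩
  rw [e1, contDiff_one_iff_deriv, e2]
  exact ⟨fun x => (cutoffChi'_hasDerivAt x).differentiableAt, cutoffChi''_continuous⟩

/-- For a C² 1-periodic function u, the extension Eu = χ·u is C², supported in [−5,6],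
and its H²-type integral over ℝ is bounded by the termwise estimate
11·[(1 + 2·(3/8)² + 3·(2√3/15)²)·∫₀¹u² + (2 + 12·(3/8)²)·∫₀¹(u')² + 3·∫₀¹(u'')²]. -/
theorem extension_operator_termwise_bound
    (u : ℝ → ℝ) (hu : ContDiff ℝ 2 u) (hper : Function.Periodic u 1) :
    ContDiff ℝ 2 (fun x => cutoffChi x * u x) ∧
      Function.support (fun x => cutoffChi x * u x) ⊆ Set.Icc (-5 : ℝ) 6 ∧
      (∫ x : ℝ, ((cutoffChi x * u x) ^ 2
          + (deriv (fun x => cutoffChi x * u x) x) ^ 2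
          + (deriv (deriv (fun x => cutoffChi x * u x)) x) ^ 2)) ≤
        11 * ((1 + 2 * (3 / 8 : ℝ) ^ 2 + 3 * (2 * Real.sqrt 3 / 15) ^ 2) *
            (∫ x in (0 : ℝ)..1, u x ^ 2)
          + (2 + 12 * (3 / 8 : ℝ) ^ 2) * (∫ x in (0 : ℝ)..1, (deriv u x) ^ 2)
          + 3 * (∫ x in (0 : ℝ)..1, (deriv (deriv u) x) ^ 2)) := by
  -- basic differentiability facts about u
  have hu1 : Differentiable ℝ u := hu.differentiable (by norm_num)
  have huD : ∀ x, HasDerivAt u (deriv u x) x := fun x => (hu1 x).hasDerivAt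
  have hu2 : ContDiff ℝ 1 (deriv u) := by
    rw [show (2 : WithTop ℕ∞) = 1 + 1 from rfl, contDiff_succ_iff_deriv] at hu
    exact hu.2.2
  have hu'1 : Differentiable ℝ (deriv u) := hu2.differentiable (by norm_num)
  have huD2 : ∀ x, HasDerivAt (deriv u) (deriv (deriv u) x) x := fun x => (hu'1 x).hasDerivAt
  have hcu : Continuous u := hu1.continuous
  have hcu' : Continuous (deriv u) := hu'1.continuous
  have hcu'' : Continuous (deriv (deriv u)) := (contDiff_one_iff_deriv.mp hu2).2
  have hχc : Continuous cutoffChi := by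
    have h : Differentiable ℝ cutoffChi := fun x => (cutoffChi_hasDerivAt x).differentiableAt
    exact h.continuous
  have hχ'c : Continuous cutoffChi' := by
    have h : Differentiable ℝ cutoffChi' := fun x => (cutoffChi'_hasDerivAt x).differentiableAt
    exact h.continuous
  refine ⟨cutoffChi_contDiff.mul hu, ?_, ?_⟩
  · intro x hx
    simp only [Function.mem_support] at hx
    by_contra hmem
    apply hx
    rw [Set.mem_Icc, not_and_or, not_le, not_le] at hmem
    have hor : x ≤ -5 ∨ 6 < x := hmem.imp le_of_lt id
    rw [cutoffChi_eq_zero hor, zero_mul]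
  -- rewrite the derivatives explicitly
  have ef1 : deriv (fun x => cutoffChi x * u x)
      = fun x => cutoffChi' x * u x + cutoffChi x * deriv u x :=
    funext fun x => ((cutoffChi_hasDerivAt x).mul (huD x)).deriv
  have hf2 : ∀ x, HasDerivAt (fun x => cutoffChi' x * u x + cutoffChi x * deriv u x)
      (cutoffChi'' x * u x + 2 * (cutoffChi' x * deriv u x)
        + cutoffChi x * deriv (deriv u) x) x := by
    intro x
    have h := ((cutoffChi'_hasDerivAt x).mul (huD x)).add ((cutoffChi_hasDerivAt x).mul (huD2 x))
    refine h.congr_deriv ?_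
    ring
  have ef2 : deriv (fun x => cutoffChi' x * u x + cutoffChi x * deriv u x)
      = fun x => cutoffChi'' x * u x + 2 * (cutoffChi' x * deriv u x)
        + cutoffChi x * deriv (deriv u) x :=
    funext fun x => (hf2 x).deriv
  rw [ef1, ef2]
  -- the integrand and its majorant
  set G : ℝ → ℝ := fun x => (cutoffChi x * u x) ^ 2
      + (cutoffChi' x * u x + cutoffChi x * deriv u x) ^ 2
      + (cutoffChi'' x * u x + 2 * (cutoffChi' x * deriv u x)
          + cutoffChi x * deriv (deriv u) x) ^ 2 with hG
  set W : ℝ → ℝ := fun x => (1 + 2*(3/8:ℝ)^2 + 3*(4/75)) * u x ^ 2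
      + (2 + 12*(3/8:ℝ)^2) * (deriv u x) ^ 2 + 3 * (deriv (deriv u) x) ^ 2 with hW
  have hGc : Continuous G := by
    apply Continuous.add
    apply Continuous.add
    · exact (hχc.mul hcu).pow 2
    · exact ((hχ'c.mul hcu).add (hχc.mul hcu')).pow 2
    · exact (((cutoffChi''_continuous.mul hcu).add
        ((continuous_const.mul (hχ'c.mul hcu')))).add (hχc.mul hcu'')).pow 2
  have hWc : Continuous W := by
    apply Continuous.add
    apply Continuous.add
    · exact continuous_const.mul (hcu.pow 2)
    · exact continuous_const.mul (hcu'.pow 2)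
    · exact continuous_const.mul (hcu''.pow 2)
  have hGsupp : Function.support G ⊆ Set.Ioc (-5:ℝ) 6 := by
    intro x hx
    simp only [Function.mem_support] at hx
    by_contra hmem
    apply hx
    have hor : x ≤ -5 ∨ 6 < x := by
      rw [Set.mem_Ioc, not_and_or, not_lt, not_le] at hmem
      exact hmem
    rw [hG]
    simp only [cutoffChi_eq_zero hor, cutoffChi'_eq_zero hor, cutoffChi''_eq_zero hor]
    ring
  have hstep1 : (∫ x : ℝ, G x) = ∫ x in (-5:ℝ)..6, G x :=
    (intervalIntegral.integral_eq_integral_of_support_subset hGsupp).symm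
  have hWper : Function.Periodic W 1 := by
    intro x
    simp only [hW]
    rw [hper x, periodic_deriv' hper x, periodic_deriv' (periodic_deriv' hper) x]
  have hstep2 : (∫ x in (-5:ℝ)..6, G x) ≤ ∫ x in (-5:ℝ)..6, W x := by
    apply intervalIntegral.integral_mono_on (by norm_num)
      (hGc.intervalIntegrable _ _) (hWc.intervalIntegrable _ _)
    intro x _
    exact pointwise_sq_bound (cutoffChi_sq_le x) (cutoffChi'_sq_le x) (cutoffChi''_sq_le x)
  have hstep3 : (∫ x in (-5:ℝ)..6, W x) = 11 * ∫ x in (0:ℝ)..1, W x :=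
    periodic_integral_eleven hWper hWc
  have hstep4 : (∫ x in (0:ℝ)..1, W x)
      = (1 + 2*(3/8:ℝ)^2 + 3*(4/75)) * (∫ x in (0:ℝ)..1, u x ^ 2)
        + (2 + 12*(3/8:ℝ)^2) * (∫ x in (0:ℝ)..1, (deriv u x) ^ 2)
        + 3 * (∫ x in (0:ℝ)..1, (deriv (deriv u) x) ^ 2) := by
    rw [hW]
    rw [intervalIntegral.integral_add (f := fun x => (1 + 2*(3/8:ℝ)^2 + 3*(4/75)) * u x ^ 2
          + (2 + 12*(3/8:ℝ)^2) * (deriv u x) ^ 2) (g := fun x => 3 * (deriv (deriv u) x) ^ 2)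
          (((continuous_const.mul (hcu.pow 2)).add
          (continuous_const.mul (hcu'.pow 2))).intervalIntegrable _ _)
        ((continuous_const.mul (hcu''.pow 2)).intervalIntegrable _ _),
      intervalIntegral.integral_add (f := fun x => (1 + 2*(3/8:ℝ)^2 + 3*(4/75)) * u x ^ 2)
          (g := fun x => (2 + 12*(3/8:ℝ)^2) * (deriv u x) ^ 2)
          ((continuous_const.mul (hcu.pow 2)).intervalIntegrable _ _)
        ((continuous_const.mul (hcu'.pow 2)).intervalIntegrable _ _),
      intervalIntegral.integral_const_mul, intervalIntegral.integral_const_mul,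
      intervalIntegral.integral_const_mul]
  have hsqrt : (2 * Real.sqrt 3 / 15)^2 = 4/75 := by
    rw [div_pow, mul_pow, sq_sqrt (by norm_num : (0:ℝ) ≤ 3)]
    norm_num
  calc (∫ x : ℝ, G x) = ∫ x in (-5:ℝ)..6, G x := hstep1
    _ ≤ ∫ x in (-5:ℝ)..6, W x := hstep2
    _ = 11 * ∫ x in (0:ℝ)..1, W x := hstep3
    _ = 11 * ((1 + 2 * (3 / 8 : ℝ) ^ 2 + 3 * (2 * Real.sqrt 3 / 15) ^ 2) *
            (∫ x in (0 : ℝ)..1, u x ^ 2)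
          + (2 + 12 * (3 / 8 : ℝ) ^ 2) * (∫ x in (0 : ℝ)..1, (deriv u x) ^ 2)
          + 3 * (∫ x in (0 : ℝ)..1, (deriv (deriv u) x) ^ 2)) := by
        rw [hstep4, hsqrt]
end

section
/- Let χ : ℝ → ℝ be the C² cutoff defined by χ(t) = H((t + 5)/5) for t ∈ [−5, 0], χ(t) = 1 for t ∈ [0, 1], χ(t) = H((6 − t)/5) for t ∈ [1, 6], and χ(t) = 0 otherwise, where H(t) = 6t⁵ − 15t⁴ + 10t³. Let u : ℝ → ℝ be twice continuously differentiable and 1-periodic, and set Eu = χ·u. Then ∫_ℝ ((Eu)(x)² + ((Eu)'(x))² + ((Eu)''(x))²) dx ≤ 40.5625 · ∫₀¹ (u(x)² + (u'(x))² + (u''(x))²) dx. -/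
open Real Set MeasureTheory intervalIntegral

open Filter

section Aux

lemma hasDerivAt_glue_s15 {f g F : ℝ → ℝ} {a d : ℝ}
    (hf : HasDerivAt f d a) (hg : HasDerivAt g d a)
    (h : ∀ᶠ x in nhds a, (x ≤ a → F x = f x) ∧ (a ≤ x → F x = g x)) :
    HasDerivAt F d a := by
  have h1 : HasDerivWithinAt F d (Iic a) a := by
    refine hf.hasDerivWithinAt.congr_of_eventuallyEq ?_ ((h.self_of_nhds).1 le_rfl)
    filter_upwards [eventually_nhdsWithin_of_eventually_nhds h, self_mem_nhdsWithin] with x hx hx'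
    exact hx.1 hx'
  have h2 : HasDerivWithinAt F d (Ici a) a := by
    refine hg.hasDerivWithinAt.congr_of_eventuallyEq ?_ ((h.self_of_nhds).2 le_rfl)
    filter_upwards [eventually_nhdsWithin_of_eventually_nhds h, self_mem_nhdsWithin] with x hx hx'
    exact hx.2 hx'
  have h3 := h1.union h2
  rw [Iic_union_Ici] at h3
  rwa [← hasDerivWithinAt_univ]

lemma continuousAt_glue_s15 {f g F : ℝ → ℝ} {a : ℝ}
    (hf : ContinuousAt f a) (hg : ContinuousAt g a)
    (h : ∀ᶠ x in nhds a, (x ≤ a → F x = f x) ∧ (a ≤ x → F x = g x)) :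
    ContinuousAt F a := by
  have h1 : ContinuousWithinAt F (Iic a) a := by
    refine (hf.continuousWithinAt).congr_of_eventuallyEq ?_ ((h.self_of_nhds).1 le_rfl)
    filter_upwards [eventually_nhdsWithin_of_eventually_nhds h, self_mem_nhdsWithin] with x hx hx'
    exact hx.1 hx'
  have h2 : ContinuousWithinAt F (Ici a) a := by
    refine (hg.continuousWithinAt).congr_of_eventuallyEq ?_ ((h.self_of_nhds).2 le_rfl)
    filter_upwards [eventually_nhdsWithin_of_eventually_nhds h, self_mem_nhdsWithin] with x hx hx'
    exact hx.2 hx'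
  have h3 := h1.union h2
  rwa [Iic_union_Ici, continuousWithinAt_univ] at h3

/-- generic 5-piece function of the same shape as the cutoff -/
noncomputable def pc (A B : ℝ → ℝ) (c : ℝ) (t : ℝ) : ℝ :=
  if t < -5 then 0
  else if t ≤ 0 then A ((t + 5) / 5)
  else if t ≤ 1 then c
  else if t ≤ 6 then B ((6 - t) / 5)
  else 0

variable {A B A' B' : ℝ → ℝ} {c : ℝ} {x : ℝ}

lemma pc_of_lt (h : x < -5) : pc A B c x = 0 := if_pos h
lemma pc_left (h1 : -5 ≤ x) (h2 : x ≤ 0) : pc A B c x = A ((x + 5) / 5) := by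
  unfold pc; rw [if_neg (not_lt.2 h1), if_pos h2]
lemma pc_mid (h1 : 0 < x) (h2 : x ≤ 1) : pc A B c x = c := by
  unfold pc; rw [if_neg (by linarith), if_neg (not_le.2 h1), if_pos h2]
lemma pc_right (h1 : 1 < x) (h2 : x ≤ 6) : pc A B c x = B ((6 - x) / 5) := by
  unfold pc; rw [if_neg (by linarith), if_neg (by linarith), if_neg (not_le.2 h1), if_pos h2]
lemma pc_top (h : 6 < x) : pc A B c x = 0 := by
  unfold pc; rw [if_neg (by linarith), if_neg (by linarith), if_neg (by linarith),
    if_neg (not_le.2 h)]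

lemma pc_congr {A₂ B₂ : ℝ → ℝ} (hA : ∀ s, A s = A₂ s) (hB : ∀ s, B s = B₂ s) :
    pc A B c = pc A₂ B₂ c := by
  rw [funext hA, funext hB]

lemma pc_hasDerivAt
    (hA : ∀ s, HasDerivAt A (A' s) s) (hB : ∀ s, HasDerivAt B (B' s) s)
    (hA0 : A 0 = 0) (hA1 : A 1 = c) (hB1 : B 1 = c) (hB0 : B 0 = 0)
    (hA'0 : A' 0 = 0) (hA'1 : A' 1 = 0) (hB'1 : B' 1 = 0) (hB'0 : B' 0 = 0)
    (t : ℝ) :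
    HasDerivAt (pc A B c) (pc (fun s => A' s * (1 / 5)) (fun s => B' s * (-(1 / 5))) 0 t) t := by
  have inner1 : ∀ x : ℝ, HasDerivAt (fun x : ℝ => (x + 5) / 5) (1 / 5) x := fun x => by
    simpa using ((hasDerivAt_id x).add_const (5 : ℝ)).div_const 5
  have inner2 : ∀ x : ℝ, HasDerivAt (fun x : ℝ => (6 - x) / 5) (-(1 / 5)) x := fun x => by
    have h := ((hasDerivAt_id x).const_sub (6 : ℝ)).div_const 5
    exact h.congr_deriv (by norm_num)
  have pieceA : ∀ x : ℝ, HasDerivAt (fun y => A ((y + 5) / 5)) (A' ((x + 5) / 5) * (1 / 5)) x :=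
    fun x => (hA _).comp x (inner1 x)
  have pieceB : ∀ x : ℝ, HasDerivAt (fun y => B ((6 - y) / 5)) (B' ((6 - x) / 5) * (-(1 / 5))) x :=
    fun x => (hB _).comp x (inner2 x)
  rcases lt_trichotomy t (-5) with h | h | h
  · rw [pc_of_lt h]
    have heq : pc A B c =ᶠ[nhds t] fun _ => (0 : ℝ) := by
      filter_upwards [Iio_mem_nhds h] with x hx
      exact pc_of_lt hx
    exact heq.hasDerivAt_iff.mpr (hasDerivAt_const t 0)
  · subst h
    rw [pc_left (by norm_num) (by norm_num)]
    have hval : A' ((-5 + 5) / 5) * (1 / 5) = 0 := by norm_num [hA'0]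
    rw [hval]
    have hp := pieceA (-5)
    norm_num [hA'0] at hp
    refine hasDerivAt_glue_s15 (hasDerivAt_const (-5 : ℝ) 0) hp ?_
    filter_upwards [Iio_mem_nhds (show (-5 : ℝ) < 0 by norm_num)] with x hx
    constructor
    · intro hle
      rcases lt_or_eq_of_le hle with h' | h'
      · exact pc_of_lt h'
      · rw [pc_left (le_of_eq h'.symm) (by linarith), h']; norm_num [hA0]
    · intro hge; exact pc_left hge hx.le
  · rcases lt_trichotomy t 0 with h0 | h0 | h0
    · rw [pc_left h.le h0.le]
      have heq : pc A B c =ᶠ[nhds t] fun y => A ((y + 5) / 5) := by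
        filter_upwards [Ioo_mem_nhds h h0] with x hx
        exact pc_left hx.1.le hx.2.le
      exact heq.hasDerivAt_iff.mpr (pieceA t)
    · subst h0
      rw [pc_left (by norm_num) le_rfl]
      have hval : A' ((0 + 5) / 5) * (1 / 5) = 0 := by norm_num [hA'1]
      rw [hval]
      have hp := pieceA 0
      norm_num [hA'1] at hp
      refine hasDerivAt_glue_s15 hp (hasDerivAt_const (0 : ℝ) c) ?_
      filter_upwards [Ioo_mem_nhds (show (-5 : ℝ) < 0 by norm_num) (show (0:ℝ) < 1 by norm_num)]
        with x hx
      constructor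
      · intro hle; exact pc_left hx.1.le hle
      · intro hge
        rcases lt_or_eq_of_le hge with h' | h'
        · exact pc_mid h' hx.2.le
        · rw [pc_left (by linarith) (le_of_eq h'.symm), ← h']; norm_num [hA1]
    · rcases lt_trichotomy t 1 with h1 | h1 | h1
      · rw [pc_mid h0 h1.le]
        have heq : pc A B c =ᶠ[nhds t] fun _ => c := by
          filter_upwards [Ioo_mem_nhds h0 h1] with x hx
          exact pc_mid hx.1 hx.2.le
        exact heq.hasDerivAt_iff.mpr (hasDerivAt_const t c)
      · subst h1
        rw [pc_mid (by norm_num) le_rfl]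
        have hp := pieceB 1
        norm_num [hB'1] at hp
        refine hasDerivAt_glue_s15 (hasDerivAt_const (1 : ℝ) c) hp ?_
        filter_upwards [Ioo_mem_nhds (show (0 : ℝ) < 1 by norm_num) (show (1:ℝ) < 6 by norm_num)]
          with x hx
        constructor
        · intro hle; exact pc_mid hx.1 hle
        · intro hge
          rcases lt_or_eq_of_le hge with h' | h'
          · exact pc_right h' hx.2.le
          · rw [pc_mid (by linarith) (le_of_eq h'.symm), ← h']; norm_num [hB1]
      · rcases lt_trichotomy t 6 with h6 | h6 | h6
        · rw [pc_right h1 h6.le]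
          have heq : pc A B c =ᶠ[nhds t] fun y => B ((6 - y) / 5) := by
            filter_upwards [Ioo_mem_nhds h1 h6] with x hx
            exact pc_right hx.1 hx.2.le
          exact heq.hasDerivAt_iff.mpr (pieceB t)
        · subst h6
          rw [pc_right (by norm_num) le_rfl]
          have hval : B' ((6 - 6) / 5) * (-(1 / 5)) = 0 := by norm_num [hB'0]
          rw [hval]
          have hp := pieceB 6
          norm_num [hB'0] at hp
          refine hasDerivAt_glue_s15 hp (hasDerivAt_const (6 : ℝ) 0) ?_
          filter_upwards [Ioi_mem_nhds (show (1 : ℝ) < 6 by norm_num)] with x hx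
          constructor
          · intro hle; exact pc_right hx hle
          · intro hge
            rcases lt_or_eq_of_le hge with h' | h'
            · exact pc_top h'
            · rw [pc_right (by linarith) (le_of_eq h'.symm), ← h']; norm_num [hB0]
        · rw [pc_top h6]
          have heq : pc A B c =ᶠ[nhds t] fun _ => (0 : ℝ) := by
            filter_upwards [Ioi_mem_nhds h6] with x hx
            exact pc_top hx
          exact heq.hasDerivAt_iff.mpr (hasDerivAt_const t 0)

lemma pc_continuous (hA : Continuous A) (hB : Continuous B)
    (hA0 : A 0 = 0) (hA1 : A 1 = c) (hB1 : B 1 = c) (hB0 : B 0 = 0) :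
    Continuous (pc A B c) := by
  rw [continuous_iff_continuousAt]
  intro t
  have pieceA : ∀ x : ℝ, ContinuousAt (fun y : ℝ => A ((y + 5) / 5)) x := fun x =>
    (hA.comp (by continuity)).continuousAt
  have pieceB : ∀ x : ℝ, ContinuousAt (fun y : ℝ => B ((6 - y) / 5)) x := fun x =>
    (hB.comp (by continuity)).continuousAt
  rcases lt_trichotomy t (-5) with h | h | h
  · refine (continuousAt_const (y := (0:ℝ))).congr ?_
    filter_upwards [Iio_mem_nhds h] with x hx
    exact (pc_of_lt hx).symm
  · subst h
    refine continuousAt_glue_s15 (continuousAt_const (y := (0:ℝ))) (pieceA (-5)) ?_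
    filter_upwards [Iio_mem_nhds (show (-5 : ℝ) < 0 by norm_num)] with x hx
    constructor
    · intro hle
      rcases lt_or_eq_of_le hle with h' | h'
      · exact pc_of_lt h'
      · rw [pc_left (le_of_eq h'.symm) (by linarith), h']; norm_num [hA0]
    · intro hge; exact pc_left hge hx.le
  · rcases lt_trichotomy t 0 with h0 | h0 | h0
    · refine (pieceA t).congr ?_
      filter_upwards [Ioo_mem_nhds h h0] with x hx
      exact (pc_left hx.1.le hx.2.le).symm
    · subst h0
      refine continuousAt_glue_s15 (pieceA 0) (continuousAt_const (y := c)) ?_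
      filter_upwards [Ioo_mem_nhds (show (-5 : ℝ) < 0 by norm_num) (show (0:ℝ) < 1 by norm_num)]
        with x hx
      constructor
      · intro hle; exact pc_left hx.1.le hle
      · intro hge
        rcases lt_or_eq_of_le hge with h' | h'
        · exact pc_mid h' hx.2.le
        · rw [pc_left (by linarith) (le_of_eq h'.symm), ← h']; norm_num [hA1]
    · rcases lt_trichotomy t 1 with h1 | h1 | h1
      · refine (continuousAt_const (y := c)).congr ?_
        filter_upwards [Ioo_mem_nhds h0 h1] with x hx
        exact (pc_mid hx.1 hx.2.le).symm
      · subst h1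
        refine continuousAt_glue_s15 (continuousAt_const (y := c)) (pieceB 1) ?_
        filter_upwards [Ioo_mem_nhds (show (0 : ℝ) < 1 by norm_num) (show (1:ℝ) < 6 by norm_num)]
          with x hx
        constructor
        · intro hle; exact pc_mid hx.1 hle
        · intro hge
          rcases lt_or_eq_of_le hge with h' | h'
          · exact pc_right h' hx.2.le
          · rw [pc_mid (by linarith) (le_of_eq h'.symm), ← h']; norm_num [hB1]
      · rcases lt_trichotomy t 6 with h6 | h6 | h6
        · refine (pieceB t).congr ?_
          filter_upwards [Ioo_mem_nhds h1 h6] with x hx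
          exact (pc_right hx.1 hx.2.le).symm
        · subst h6
          refine continuousAt_glue_s15 (pieceB 6) (continuousAt_const (y := (0:ℝ))) ?_
          filter_upwards [Ioi_mem_nhds (show (1 : ℝ) < 6 by norm_num)] with x hx
          constructor
          · intro hle; exact pc_right hx hle
          · intro hge
            rcases lt_or_eq_of_le hge with h' | h'
            · exact pc_top h'
            · rw [pc_right (by linarith) (le_of_eq h'.symm), ← h']; norm_num [hB0]
        · refine (continuousAt_const (y := (0:ℝ))).congr ?_
          filter_upwards [Ioi_mem_nhds h6] with x hx
          exact (pc_top hx).symm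

/-! ### The concrete cutoff and its derivatives -/

noncomputable def hermD (t : ℝ) : ℝ := 30 * t ^ 4 - 60 * t ^ 3 + 30 * t ^ 2
noncomputable def hermDD (t : ℝ) : ℝ := 120 * t ^ 3 - 180 * t ^ 2 + 60 * t

lemma hasDerivAt_hermite (s : ℝ) : HasDerivAt hermiteQuintic (hermD s) s := by
  have h := (((hasDerivAt_pow 5 s).const_mul (6:ℝ)).sub ((hasDerivAt_pow 4 s).const_mul 15)).add
    ((hasDerivAt_pow 3 s).const_mul 10)
  have h2 : HasDerivAt (fun t : ℝ => 6*t^5 - 15*t^4 + 10*t^3) (hermD s) s := by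
    exact h.congr_deriv (by simp [hermD] <;> ring)
  exact h2

lemma hasDerivAt_hermD (s : ℝ) : HasDerivAt hermD (hermDD s) s := by
  have h := (((hasDerivAt_pow 4 s).const_mul (30:ℝ)).sub ((hasDerivAt_pow 3 s).const_mul 60)).add
    ((hasDerivAt_pow 2 s).const_mul 30)
  have h2 : HasDerivAt (fun t : ℝ => 30*t^4 - 60*t^3 + 30*t^2) (hermDD s) s := by
    exact h.congr_deriv (by simp [hermDD] <;> ring)
  exact h2

lemma cutoffChi_eq : cutoffChi = pc hermiteQuintic hermiteQuintic 1 := rfl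

noncomputable def chi1 : ℝ → ℝ :=
  pc (fun s => hermD s * (1 / 5)) (fun s => hermD s * (-(1 / 5))) 0

noncomputable def chi2 : ℝ → ℝ :=
  pc (fun s => hermDD s * (1 / 25)) (fun s => hermDD s * (1 / 25)) 0

lemma chi_hasDerivAt (t : ℝ) : HasDerivAt cutoffChi (chi1 t) t := by
  rw [cutoffChi_eq]
  exact pc_hasDerivAt hasDerivAt_hermite hasDerivAt_hermite
    (by norm_num [hermiteQuintic]) (by norm_num [hermiteQuintic])
    (by norm_num [hermiteQuintic]) (by norm_num [hermiteQuintic])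
    (by norm_num [hermD]) (by norm_num [hermD]) (by norm_num [hermD]) (by norm_num [hermD]) t

lemma chi1_hasDerivAt (t : ℝ) : HasDerivAt chi1 (chi2 t) t := by
  have h := pc_hasDerivAt (A := fun s => hermD s * (1/5)) (A' := fun s => hermDD s * (1/5))
    (B := fun s => hermD s * (-(1/5))) (B' := fun s => hermDD s * (-(1/5))) (c := 0)
    (fun s => (hasDerivAt_hermD s).mul_const _) (fun s => (hasDerivAt_hermD s).mul_const _)
    (by norm_num [hermD]) (by norm_num [hermD]) (by norm_num [hermD]) (by norm_num [hermD])
    (by norm_num [hermDD]) (by norm_num [hermDD]) (by norm_num [hermDD]) (by norm_num [hermDD]) t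
  have he : pc (fun s => ((fun s => hermDD s * (1/5)) s) * (1 / 5))
      (fun s => ((fun s => hermDD s * (-(1/5))) s) * (-(1 / 5))) 0 = chi2 :=
    pc_congr (fun s => by show hermDD s * (1/5) * (1/5) = hermDD s * (1/25); ring)
      (fun s => by show hermDD s * (-(1/5)) * (-(1/5)) = hermDD s * (1/25); ring)
  rw [he] at h
  exact h

lemma chi2_continuous : Continuous chi2 := by
  refine pc_continuous ?_ ?_ ?_ ?_ ?_ ?_
  · unfold hermDD; continuity
  · unfold hermDD; continuity
  · norm_num [hermDD]
  · norm_num [hermDD]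
  · norm_num [hermDD]
  · norm_num [hermDD]

/-! ### Bounds on the cutoff and its derivatives -/

lemma herm_sq_le {s : ℝ} (h0 : 0 ≤ s) (h1 : s ≤ 1) : (hermiteQuintic s) ^ 2 ≤ 1 := by
  have hlow : 0 ≤ hermiteQuintic s := by
    have h2 : (0:ℝ) ≤ 6 * s ^ 2 - 15 * s + 10 := by nlinarith [sq_nonneg (s - 5/4)]
    have := mul_nonneg (pow_nonneg h0 3) h2
    unfold hermiteQuintic; nlinarith
  have hhigh : hermiteQuintic s ≤ 1 := by
    have h2 : (0:ℝ) ≤ 6 * s ^ 2 + 3 * s + 1 := by positivity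
    have := mul_nonneg (pow_nonneg (sub_nonneg.2 h1) 3) h2
    unfold hermiteQuintic; nlinarith
  nlinarith

lemma hermD_sq_le {s : ℝ} (h0 : 0 ≤ s) (h1 : s ≤ 1) : (hermD s) ^ 2 ≤ 225 / 64 := by
  have hx0 : (0:ℝ) ≤ s - s ^ 2 := by nlinarith
  have hx1 : s - s ^ 2 ≤ 1 / 4 := by nlinarith [sq_nonneg (s - 1/2)]
  have he : hermD s = 30 * (s - s ^ 2) ^ 2 := by unfold hermD; ring
  rw [he]
  nlinarith [pow_le_pow_left₀ hx0 hx1 2]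

lemma hermDD_sq_le {s : ℝ} (h0 : 0 ≤ s) (h1 : s ≤ 1) : (hermDD s) ^ 2 ≤ 100 / 3 := by
  have hx0 : (0:ℝ) ≤ s - s ^ 2 := by nlinarith
  have he : (hermDD s) ^ 2 = 3600 * (s - s ^ 2) ^ 2 * (1 - 4 * (s - s ^ 2)) := by
    unfold hermDD; ring
  rw [he]
  nlinarith [mul_nonneg (sq_nonneg (6 * (s - s ^ 2) - 1))
    (show (0:ℝ) ≤ 12 * (s - s ^ 2) + 1 by linarith)]

lemma chi_sq_le (t : ℝ) : (cutoffChi t) ^ 2 ≤ 1 := by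
  rw [cutoffChi_eq]
  rcases lt_or_ge t (-5) with h | h
  · rw [pc_of_lt h]; norm_num
  rcases le_or_gt t 0 with h0 | h0
  · rw [pc_left h h0]
    exact herm_sq_le (by linarith) (by linarith)
  rcases le_or_gt t 1 with h1 | h1
  · rw [pc_mid h0 h1]; norm_num
  rcases le_or_gt t 6 with h6 | h6
  · rw [pc_right h1 h6]
    exact herm_sq_le (by linarith) (by linarith)
  · rw [pc_top h6]; norm_num

lemma chi1_sq_le (t : ℝ) : (chi1 t) ^ 2 ≤ 9 / 64 := by
  unfold chi1
  rcases lt_or_ge t (-5) with h | h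
  · rw [pc_of_lt h]; norm_num
  rcases le_or_gt t 0 with h0 | h0
  · rw [pc_left h h0]
    have := hermD_sq_le (show (0:ℝ) ≤ (t+5)/5 by linarith) (show (t+5)/5 ≤ 1 by linarith)
    nlinarith
  rcases le_or_gt t 1 with h1 | h1
  · rw [pc_mid h0 h1]; norm_num
  rcases le_or_gt t 6 with h6 | h6
  · rw [pc_right h1 h6]
    have := hermD_sq_le (show (0:ℝ) ≤ (6-t)/5 by linarith) (show (6-t)/5 ≤ 1 by linarith)
    nlinarith
  · rw [pc_top h6]; norm_num

lemma chi2_sq_le (t : ℝ) : (chi2 t) ^ 2 ≤ 4 / 75 := by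
  unfold chi2
  rcases lt_or_ge t (-5) with h | h
  · rw [pc_of_lt h]; norm_num
  rcases le_or_gt t 0 with h0 | h0
  · rw [pc_left h h0]
    have := hermDD_sq_le (show (0:ℝ) ≤ (t+5)/5 by linarith) (show (t+5)/5 ≤ 1 by linarith)
    nlinarith
  rcases le_or_gt t 1 with h1 | h1
  · rw [pc_mid h0 h1]; norm_num
  rcases le_or_gt t 6 with h6 | h6
  · rw [pc_right h1 h6]
    have := hermDD_sq_le (show (0:ℝ) ≤ (6-t)/5 by linarith) (show (6-t)/5 ≤ 1 by linarith)
    nlinarith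
  · rw [pc_top h6]; norm_num

lemma chi_zero_left {x : ℝ} (h : x ≤ -5) :
    cutoffChi x = 0 ∧ chi1 x = 0 ∧ chi2 x = 0 := by
  rcases lt_or_eq_of_le h with h' | h'
  · exact ⟨by rw [cutoffChi_eq]; exact pc_of_lt h',
      by unfold chi1; exact pc_of_lt h', by unfold chi2; exact pc_of_lt h'⟩
  · subst h'
    refine ⟨?_, ?_, ?_⟩
    · rw [cutoffChi_eq, pc_left le_rfl (by norm_num)]; norm_num [hermiteQuintic]
    · unfold chi1; rw [pc_left le_rfl (by norm_num)]; norm_num [hermD]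
    · unfold chi2; rw [pc_left le_rfl (by norm_num)]; norm_num [hermDD]

lemma chi_zero_right {x : ℝ} (h : 6 < x) :
    cutoffChi x = 0 ∧ chi1 x = 0 ∧ chi2 x = 0 :=
  ⟨by rw [cutoffChi_eq]; exact pc_top h,
    by unfold chi1; exact pc_top h, by unfold chi2; exact pc_top h⟩

lemma chi_on_unit {x : ℝ} (h0 : 0 ≤ x) (h1 : x ≤ 1) :
    cutoffChi x = 1 ∧ chi1 x = 0 ∧ chi2 x = 0 := by
  rcases eq_or_lt_of_le h0 with h | h
  · rw [← h]
    refine ⟨?_, ?_, ?_⟩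
    · rw [cutoffChi_eq, pc_left (by norm_num) le_rfl]; norm_num [hermiteQuintic]
    · unfold chi1; rw [pc_left (by norm_num) le_rfl]; norm_num [hermD]
    · unfold chi2; rw [pc_left (by norm_num) le_rfl]; norm_num [hermDD]
  · exact ⟨by rw [cutoffChi_eq]; exact pc_mid h h1,
      by unfold chi1; exact pc_mid h h1, by unfold chi2; exact pc_mid h h1⟩

lemma pointwise_cs (a b c p q r : ℝ) (ha : a^2 ≤ 1) (hb : b^2 ≤ 9/64) (hc : c^2 ≤ 4/75) :
    (a*p)^2 + (b*p + a*q)^2 + (c*p + 2*b*q + a*r)^2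
      ≤ (18031/4800) * (p^2 + q^2 + r^2) := by
  have hs : (0:ℝ) ≤ p^2 + q^2 + r^2 := by positivity
  have h2 : (b*p + a*q)^2 ≤ (b^2 + a^2) * (p^2 + q^2) := by nlinarith [sq_nonneg (b*q - a*p)]
  have h3 : (c*p + 2*b*q + a*r)^2 ≤ (c^2 + 4*b^2 + a^2) * (p^2 + q^2 + r^2) := by
    nlinarith [sq_nonneg (c*q - 2*b*p), sq_nonneg (c*r - a*p), sq_nonneg (2*b*r - a*q)]
  nlinarith [mul_nonneg (sub_nonneg.2 ha) hs, mul_nonneg (sub_nonneg.2 hb) hs,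
    mul_nonneg (sub_nonneg.2 hc) hs, sq_nonneg p, sq_nonneg q, sq_nonneg r,
    mul_nonneg (sub_nonneg.2 ha) (sq_nonneg p), mul_nonneg (sub_nonneg.2 ha) (sq_nonneg q),
    mul_nonneg (sub_nonneg.2 ha) (sq_nonneg r),
    mul_nonneg (sub_nonneg.2 hb) (sq_nonneg p), mul_nonneg (sub_nonneg.2 hb) (sq_nonneg q),
    mul_nonneg (sub_nonneg.2 hc) (sq_nonneg p)]

lemma periodic_deriv'_s15 {f : ℝ → ℝ} {T : ℝ} (h : Function.Periodic f T) :
    Function.Periodic (deriv f) T := fun x => by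
  have hfe : (fun y => f (y + T)) = f := funext fun y => h y
  rw [← deriv_comp_add_const f T, hfe]

end Aux

/-- For a C² 1-periodic function u, the H²-type integral over ℝ of the extension
Eu = χ·u is bounded by 40.5625 times the H²-type integral of u over one period. -/
theorem extension_operator_norm_bound
    (u : ℝ → ℝ) (hu : ContDiff ℝ 2 u) (hper : Function.Periodic u 1) :
    (∫ x : ℝ, ((cutoffChi x * u x) ^ 2
        + (deriv (fun x => cutoffChi x * u x) x) ^ 2
        + (deriv (deriv (fun x => cutoffChi x * u x)) x) ^ 2)) ≤
      40.5625 * ∫ x in (0 : ℝ)..1,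
        (u x ^ 2 + (deriv u x) ^ 2 + (deriv (deriv u) x) ^ 2) := by
  have hdiff : Differentiable ℝ u := hu.differentiable (by norm_num)
  have hcd1 : ContDiff ℝ 1 (deriv u) := by
    have h2 : ContDiff ℝ ((1 : ℕ) + 1 : ℕ) u := by exact_mod_cast hu
    exact (contDiff_succ_iff_deriv.mp (by exact_mod_cast h2)).2.2
  have hdiff1 : Differentiable ℝ (deriv u) := hcd1.differentiable (by norm_num)
  have hu' : ∀ x, HasDerivAt u (deriv u x) x := fun x => (hdiff x).hasDerivAt
  have hu'' : ∀ x, HasDerivAt (deriv u) (deriv (deriv u) x) x := fun x => (hdiff1 x).hasDerivAt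
  have hcontu : Continuous u := hu.continuous
  have hcontu1 : Continuous (deriv u) := hcd1.continuous
  have hcontu2 : Continuous (deriv (deriv u)) := (contDiff_one_iff_deriv.mp hcd1).2
  have hE : ∀ x, HasDerivAt (fun x => cutoffChi x * u x)
      (chi1 x * u x + cutoffChi x * deriv u x) x :=
    fun x => (chi_hasDerivAt x).mul (hu' x)
  have hd1 : deriv (fun x => cutoffChi x * u x)
      = fun x => chi1 x * u x + cutoffChi x * deriv u x :=
    funext fun x => (hE x).deriv
  have hE1 : ∀ x, HasDerivAt (fun x => chi1 x * u x + cutoffChi x * deriv u x)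
      (chi2 x * u x + 2 * chi1 x * deriv u x + cutoffChi x * deriv (deriv u) x) x := by
    intro x
    have h := ((chi1_hasDerivAt x).mul (hu' x)).add ((chi_hasDerivAt x).mul (hu'' x))
    exact h.congr_deriv (by ring)
  have hd2 : deriv (deriv (fun x => cutoffChi x * u x))
      = fun x => chi2 x * u x + 2 * chi1 x * deriv u x + cutoffChi x * deriv (deriv u) x := by
    rw [hd1]; exact funext fun x => (hE1 x).deriv
  -- rewrite the integrand
  have hIG : (fun x : ℝ => (cutoffChi x * u x) ^ 2
        + (deriv (fun x => cutoffChi x * u x) x) ^ 2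
        + (deriv (deriv (fun x => cutoffChi x * u x)) x) ^ 2)
      = (fun x : ℝ => (cutoffChi x * u x) ^ 2
        + (chi1 x * u x + cutoffChi x * deriv u x) ^ 2
        + (chi2 x * u x + 2 * chi1 x * deriv u x + cutoffChi x * deriv (deriv u) x) ^ 2) := by
    funext x; rw [hd2, hd1]
  rw [hIG]
  set G : ℝ → ℝ := fun x : ℝ => (cutoffChi x * u x) ^ 2
        + (chi1 x * u x + cutoffChi x * deriv u x) ^ 2
        + (chi2 x * u x + 2 * chi1 x * deriv u x + cutoffChi x * deriv (deriv u) x) ^ 2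
    with hGdef
  set g : ℝ → ℝ := fun x : ℝ => u x ^ 2 + (deriv u x) ^ 2 + (deriv (deriv u) x) ^ 2 with hgdef
  set I : ℝ := ∫ x in (0:ℝ)..1, g x with hIdef
  -- continuity facts
  have hchic : Continuous cutoffChi := by
    rw [continuous_iff_continuousAt]; exact fun x => (chi_hasDerivAt x).continuousAt
  have hchi1c : Continuous chi1 := by
    rw [continuous_iff_continuousAt]; exact fun x => (chi1_hasDerivAt x).continuousAt
  have hchi2c : Continuous chi2 := chi2_continuous
  have hGc : Continuous G := by
    rw [hGdef]
    exact (((hchic.mul hcontu).pow 2).add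
        (((hchi1c.mul hcontu).add (hchic.mul hcontu1)).pow 2)).add
      ((((hchi2c.mul hcontu).add ((continuous_const.mul hchi1c).mul hcontu1)).add
        (hchic.mul hcontu2)).pow 2)
  have hgc : Continuous g := by
    rw [hgdef]
    exact ((hcontu.pow 2).add (hcontu1.pow 2)).add (hcontu2.pow 2)
  have hgper : Function.Periodic g 1 := by
    intro x
    simp only [hgdef, hper x, (periodic_deriv'_s15 hper) x, (periodic_deriv'_s15 (periodic_deriv'_s15 hper)) x]
  have hInn : 0 ≤ I := by
    rw [hIdef]
    exact intervalIntegral.integral_nonneg (by norm_num) (fun x _ => by positivity)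
  -- support
  have hsupp : Function.support G ⊆ Ioc (-5 : ℝ) 6 := by
    rw [Function.support_subset_iff']
    intro x hx
    rw [mem_Ioc, not_and_or] at hx
    have hzero : cutoffChi x = 0 ∧ chi1 x = 0 ∧ chi2 x = 0 := by
      rcases hx with hx | hx
      · exact chi_zero_left (by linarith [not_lt.mp hx])
      · exact chi_zero_right (not_le.mp hx)
    rw [hGdef]
    simp [hzero.1, hzero.2.1, hzero.2.2]
  have hIR : (∫ x : ℝ, G x) = ∫ x in (-5 : ℝ)..6, G x :=
    (intervalIntegral.integral_eq_integral_of_support_subset hsupp).symm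
  -- split into 11 unit intervals
  set a : ℕ → ℝ := fun k => -5 + k with hadef
  have ha : ∀ k : ℕ, a (k + 1) = a k + 1 := by
    intro k; rw [hadef]; push_cast; ring
  have hsplit : (∑ i ∈ Finset.range 11, ∫ x in a i..a (i+1), G x) = ∫ x in (a 0)..(a 11), G x :=
    intervalIntegral.sum_integral_adjacent_intervals
      (fun k _ => hGc.intervalIntegrable _ _)
  have ha0 : a 0 = -5 := by rw [hadef]; norm_num
  have ha11 : a 11 = 6 := by rw [hadef]; norm_num
  -- per-interval bounds
  have hptwise : ∀ x : ℝ, G x ≤ (18031/4800) * g x := by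
    intro x
    rw [hGdef, hgdef]
    exact pointwise_cs _ _ _ _ _ _ (chi_sq_le x) (chi1_sq_le x) (chi2_sq_le x)
  have hper_int : ∀ i : ℕ, (∫ x in a i..a (i+1), g x) = I := by
    intro i
    rw [ha i]
    have := hgper.intervalIntegral_add_eq (a i) 0
    rw [this, hIdef]
    norm_num
  have hbound : ∀ i ∈ Finset.range 11,
      (∫ x in a i..a (i+1), G x) ≤ (if i = 5 then 1 else 18031/4800) * I := by
    intro i _
    by_cases hi5 : i = 5
    · subst hi5
      rw [if_pos rfl, one_mul]
      have ha5 : a 5 = 0 := by rw [hadef]; norm_num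
      have ha6 : a 6 = 1 := by rw [hadef]; norm_num
      rw [ha5, ha6, hIdef]
      refine le_of_eq (intervalIntegral.integral_congr ?_)
      intro x hx
      rw [uIcc_of_le (by norm_num : (0:ℝ) ≤ 1)] at hx
      obtain ⟨hc1, hc2, hc3⟩ := chi_on_unit hx.1 hx.2
      rw [hGdef, hgdef]
      simp only [hc1, hc2, hc3]
      ring
    · rw [if_neg hi5]
      have hle : a i ≤ a (i + 1) := by rw [ha i]; linarith
      calc (∫ x in a i..a (i+1), G x)
          ≤ ∫ x in a i..a (i+1), (18031/4800) * g x := by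
            refine intervalIntegral.integral_mono_on hle (hGc.intervalIntegrable _ _)
              ((continuous_const.mul hgc).intervalIntegrable _ _) (fun x _ => hptwise x)
        _ = (18031/4800) * ∫ x in a i..a (i+1), g x := by
            rw [intervalIntegral.integral_const_mul]
        _ = (18031/4800) * I := by rw [hper_int i]
  -- combine
  have hsum_le : (∫ x in (a 0)..(a 11), G x)
      ≤ ∑ i ∈ Finset.range 11, (if i = 5 then 1 else 18031/4800) * I := by
    rw [← hsplit]
    exact Finset.sum_le_sum hbound
  have hsum_val : (∑ i ∈ Finset.range 11, (if i = 5 then (1:ℝ) else 18031/4800) * I)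
      = (10 * (18031/4800) + 1) * I := by
    norm_num [Finset.sum_range_succ]
    ring
  rw [hIR]
  calc (∫ x in (-5:ℝ)..6, G x) = ∫ x in (a 0)..(a 11), G x := by rw [ha0, ha11]
    _ ≤ (10 * (18031/4800) + 1) * I := by rw [← hsum_val]; exact hsum_le
    _ ≤ 40.5625 * I := by nlinarith [hInn]
end
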